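/- arXiv:1805.02519 — 6 statements merged into one kernel-verified Lean document; each statement's English description precedes it below -/
import Mathlib

section
/- If G is a graph of order n with independence number α < n, then the number of maximum independent sets of G is at most ⌈n/α⌉^(n mod α) · ⌊n/α⌋^(α − (n mod α)). -/
open SimpleGraph

/-- A set of vertices is independent if its vertices are pairwise non-adjacent. -/
def SimpleGraph.IsIndepSet' {V : Type*} (G : SimpleGraph V) (s : Set V) : Prop :=
  s.Pairwise (fun u v => ¬ G.Adj u v)

/-- The independence number of a graph. -/
noncomputable def indepNum {V : Type*} (G : SimpleGraph V) : ℕ :=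
  sSup {k | ∃ s : Finset V, G.IsIndepSet' ↑s ∧ s.card = k}

/-- The number of maximum independent sets of a graph. -/
noncomputable def numMaxIndep {V : Type*} (G : SimpleGraph V) : ℕ :=
  {s : Finset V | G.IsIndepSet' ↑s ∧ s.card = _root_.indepNum G}.ncard

/-!
Let `P(m, k)` be the largest product of `k` natural numbers with sum `m`; it is attained when the
parts are as equal as possible, since moving a unit from a part `b + 2 + c` to a part `b` does not
decrease the product. The claimed bound is `P(n, α)`.

Induct on the vertex set `A`. Choose `v ∈ A` whose closed neighbourhood `N[v]` in `A` is smallest,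
of size `d + 1`. A maximum independent set of `A` must meet `N[v]`, otherwise `v` could be added.
Those containing `u ∈ N[v]` inject, by deleting `u`, into the maximum independent sets of
`A \ N[u]`, which has at most `|A| - d - 1` vertices and independence number `α - 1`. Hence there
are at most `(d + 1) P(|A| - d - 1, α - 1) ≤ P(|A|, α)` of them, the last step because
`P(m, k)` times one further part `d + 1` is a product of `k + 1` numbers with sum `m + d + 1`.
-/

open Finset

-- The `P(n, k)` above for `0 < k`: the product of `k` parts of `n` that are as equal as possible.
def balancedProd (n k : ℕ) : ℕ := (n / k + 1) ^ (n % k) * (n / k) ^ (k - n % k)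

def balancedParts (n k : ℕ) : Multiset ℕ :=
  Multiset.replicate (n % k) (n / k + 1) + Multiset.replicate (k - n % k) (n / k)

lemma balancedProd_mul_add {k r : ℕ} (m : ℕ) (hr : r < k) :
    balancedProd (k * m + r) k = (m + 1) ^ r * m ^ (k - r) := by
  have hk : 0 < k := by omega
  rw [balancedProd, Nat.mul_add_div hk, Nat.div_eq_of_lt hr, Nat.mul_add_mod_self_left,
    Nat.mod_eq_of_lt hr, add_zero]

lemma card_balancedParts (n : ℕ) {k : ℕ} (hk : 0 < k) :
    Multiset.card (balancedParts n k) = k := by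
  have := Nat.mod_lt n hk
  simp only [balancedParts, Multiset.card_add, Multiset.card_replicate]
  omega

lemma sum_balancedParts (n k : ℕ) : (balancedParts n k).sum = n := by
  rcases k.eq_zero_or_pos with rfl | hk
  · simp [balancedParts]
  have hr := Nat.mod_lt n hk
  have hdm := Nat.div_add_mod n k
  simp only [balancedParts, Multiset.sum_add, Multiset.sum_replicate, smul_eq_mul]
  generalize n / k = q, n % k = r at hr hdm ⊢
  obtain ⟨t, rfl⟩ := Nat.exists_eq_add_of_le hr.le
  rw [Nat.add_sub_cancel_left, ← hdm]
  ring

lemma prod_balancedParts (n k : ℕ) : (balancedParts n k).prod = balancedProd n k := by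
  simp [balancedParts, balancedProd]

namespace Multiset

lemma prod_eq_balancedProd {s : Multiset ℕ} (h : ∀ a ∈ s, ∀ b ∈ s, a ≤ b + 1) :
    s.prod = balancedProd s.sum (card s) := by
  obtain rfl | hs := eq_or_ne s 0
  · rfl
  obtain ⟨m, hm, hmin⟩ : ∃ m ∈ s, ∀ x ∈ s, m ≤ x := by
    obtain ⟨m, hm, hmin⟩ := s.toFinset.exists_min_image id (by simpa using hs)
    exact ⟨m, by simpa using hm, fun x hx => hmin x (by simpa using hx)⟩
  have hsplit : s = replicate (s.count m) m + replicate (card (s.filter (· ≠ m))) (m + 1) := by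
    rw [← eq_replicate_card.2 fun x hx => ?_, ← filter_eq', filter_add_not]
    have hx' := mem_filter.1 hx
    have := hmin x hx'.1
    have := h x hx'.1 m hm
    omega
  have hpos : 0 < s.count m := count_pos.2 hm
  rw [hsplit]
  simp only [prod_add, prod_replicate, sum_add, sum_replicate, card_add, card_replicate,
    smul_eq_mul]
  rw [show s.count m * m + card (s.filter (· ≠ m)) * (m + 1) =
      (s.count m + card (s.filter (· ≠ m))) * m + card (s.filter (· ≠ m)) by ring,
    balancedProd_mul_add _ (by omega), Nat.add_sub_cancel, mul_comm]

theorem prod_le_balancedProd (s : Multiset ℕ) : s.prod ≤ balancedProd s.sum (card s) := by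
  -- smoothing `(b + c + 2, b) ↦ (b + c + 1, b + 1)` decreases the sum of squares
  induction hK : (s.map (· ^ 2)).sum using Nat.strong_induction_on generalizing s with
  | _ K ih =>
  by_cases hbal : ∀ a ∈ s, ∀ b ∈ s, a ≤ b + 1
  · exact (prod_eq_balancedProd hbal).le
  push Not at hbal
  obtain ⟨a, ha, b, hb, hab⟩ := hbal
  obtain ⟨c, rfl⟩ : ∃ c, a = b + c + 2 := ⟨a - b - 2, by omega⟩
  obtain ⟨t, rfl⟩ : ∃ t, s = (b + c + 2) ::ₘ b ::ₘ t :=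
    ⟨(s.erase _).erase b, by
      rw [cons_erase ((mem_erase_of_ne (show b ≠ b + c + 2 by omega)).2 hb), cons_erase ha]⟩
  calc ((b + c + 2) ::ₘ b ::ₘ t).prod ≤ ((b + c + 1) ::ₘ (b + 1) ::ₘ t).prod := by
        simp only [prod_cons, ← mul_assoc]
        exact Nat.mul_le_mul_right _ (by nlinarith)
    _ ≤ balancedProd ((b + c + 1) ::ₘ (b + 1) ::ₘ t).sum
          (card ((b + c + 1) ::ₘ (b + 1) ::ₘ t)) :=
        ih _ (by subst hK; simp only [map_cons, sum_cons]; nlinarith) _ rfl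
    _ = balancedProd ((b + c + 2) ::ₘ b ::ₘ t).sum (card ((b + c + 2) ::ₘ b ::ₘ t)) := by
        simp only [sum_cons, card_cons]
        ring_nf

end Multiset

lemma balancedProd_mono (k : ℕ) : Monotone (balancedProd · k) := by
  intro n n' h
  rcases k.eq_zero_or_pos with rfl | hk
  · simp [balancedProd]
  obtain ⟨a, ha⟩ := Multiset.card_pos_iff_exists_mem.1 ((card_balancedParts n hk).symm ▸ hk)
  set t := (balancedParts n k).erase a
  have hsum : a + t.sum = n := by
    rw [← sum_balancedParts n k, ← Multiset.cons_erase ha, Multiset.sum_cons]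
  have hcard : Multiset.card t + 1 = k := by
    rw [← card_balancedParts n hk, ← Multiset.cons_erase ha, Multiset.card_cons]
  calc balancedProd n k = (a ::ₘ t).prod := by rw [Multiset.cons_erase ha, prod_balancedParts]
    _ ≤ ((a + (n' - n)) ::ₘ t).prod := by
        simp only [Multiset.prod_cons]
        exact Nat.mul_le_mul_right _ (Nat.le_add_right _ _)
    _ ≤ balancedProd ((a + (n' - n)) ::ₘ t).sum (Multiset.card ((a + (n' - n)) ::ₘ t)) :=
        Multiset.prod_le_balancedProd _
    _ = balancedProd n' k := by
        simp only [Multiset.sum_cons, Multiset.card_cons, hcard]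
        congr 1
        omega

lemma mul_balancedProd_le (a n k : ℕ) :
    a * balancedProd n k ≤ balancedProd (a + n) (k + 1) := by
  rcases k.eq_zero_or_pos with rfl | hk
  · simp [balancedProd, Nat.mod_one]
  simpa [prod_balancedParts, sum_balancedParts, card_balancedParts n hk] using
    (a ::ₘ balancedParts n k).prod_le_balancedProd

lemma Nat.ceilDiv_eq_div_add_one {n k : ℕ} (hk : 0 < k) (h : n % k ≠ 0) :
    n ⌈/⌉ k = n / k + 1 := by
  have hdm := Nat.div_add_mod n k
  have hr := Nat.mod_lt n hk
  have h1 : (n / k + 1) * k = k * (n / k) + k := by ring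
  have h2 : (n / k + 1 + 1) * k = k * (n / k) + 2 * k := by ring
  rw [Nat.ceilDiv_eq_add_pred_div]
  apply Nat.div_eq_of_lt_le <;> omega

lemma balancedProd_eq_ceilDiv {n k : ℕ} (h : 0 < n → 0 < k) :
    balancedProd n k = (n ⌈/⌉ k) ^ (n % k) * (n / k) ^ (k - n % k) := by
  rcases k.eq_zero_or_pos with rfl | hk
  · obtain rfl : n = 0 := by omega
    rfl
  rcases eq_or_ne (n % k) 0 with hr | hr
  · simp [balancedProd, hr]
  · rw [balancedProd, Nat.ceilDiv_eq_div_add_one hk hr]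

namespace SimpleGraph
variable {V : Type*} {G : SimpleGraph V}

lemma isIndepSet_insert {a : V} {s : Set V} :
    G.IsIndepSet (insert a s) ↔ G.IsIndepSet s ∧ ∀ b ∈ s, a ≠ b → ¬G.Adj a b := by
  simp only [IsIndepSet, Set.pairwise_insert, G.adj_comm, and_self]

variable [DecidableEq V] (G) [DecidableRel G.Adj]

def indepNumOn (A : Finset V) : ℕ :=
  (A.powerset.filter fun s : Finset V => G.IsIndepSet (s : Set V)).sup card

def maxIndepSetsOn (A : Finset V) : Finset (Finset V) :=
  A.powerset.filter fun s => G.IsIndepSet (s : Set V) ∧ #s = G.indepNumOn A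

def closedNbhdOn (A : Finset V) (v : V) : Finset V := insert v {x ∈ A | G.Adj v x}

variable {G} {A s : Finset V} {u v : V}

lemma mem_maxIndepSetsOn :
    s ∈ G.maxIndepSetsOn A ↔ s ⊆ A ∧ G.IsIndepSet s ∧ #s = G.indepNumOn A := by
  simp [maxIndepSetsOn]

lemma IsIndepSet.card_le_indepNumOn (hs : G.IsIndepSet s) (hsA : s ⊆ A) : #s ≤ G.indepNumOn A :=
  le_sup (mem_filter.2 ⟨mem_powerset.2 hsA, hs⟩)

lemma indepNumOn_le_card (A : Finset V) : G.indepNumOn A ≤ #A :=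
  Finset.sup_le fun _ hs => card_le_card (mem_powerset.1 (mem_filter.1 hs).1)

lemma maxIndepSetsOn_nonempty (A : Finset V) : (G.maxIndepSetsOn A).Nonempty := by
  obtain ⟨s, hs, hsup⟩ :=
    exists_mem_eq_sup (A.powerset.filter fun s : Finset V => G.IsIndepSet (s : Set V))
      ⟨∅, mem_filter.2 ⟨empty_mem_powerset A, by simp⟩⟩ card
  rw [mem_filter, mem_powerset] at hs
  exact ⟨s, mem_maxIndepSetsOn.2 ⟨hs.1, hs.2, hsup.symm⟩⟩

lemma closedNbhdOn_subset (hv : v ∈ A) : G.closedNbhdOn A v ⊆ A :=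
  insert_subset hv (filter_subset _ _)

lemma mem_closedNbhdOn_self : v ∈ G.closedNbhdOn A v := mem_insert_self _ _

lemma exists_mem_closedNbhdOn_of_mem_maxIndepSetsOn (hv : v ∈ A)
    (hs : s ∈ G.maxIndepSetsOn A) :
    ∃ u ∈ G.closedNbhdOn A v, u ∈ s := by
  obtain ⟨hsA, hsI, hscard⟩ := mem_maxIndepSetsOn.1 hs
  by_contra! h
  have hvs : v ∉ s := h v mem_closedNbhdOn_self
  have hI : G.IsIndepSet (insert v s : Finset V) := by
    rw [coe_insert, isIndepSet_insert]
    exact ⟨hsI, fun b hb _ hvb => h b (mem_insert_of_mem (mem_filter.2 ⟨hsA hb, hvb⟩)) hb⟩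
  have := hI.card_le_indepNumOn (insert_subset hv hsA)
  rw [card_insert_of_notMem hvs] at this
  omega

lemma erase_subset_sdiff_closedNbhdOn (hsA : s ⊆ A) (hs : G.IsIndepSet s) (hu : u ∈ s) :
    s.erase u ⊆ A \ G.closedNbhdOn A u := by
  intro x hx
  obtain ⟨hxu, hxs⟩ := mem_erase.1 hx
  simp only [closedNbhdOn, mem_sdiff, mem_insert, mem_filter, not_or, not_and]
  exact ⟨hsA hxs, hxu, fun _ => hs hu hxs (Ne.symm hxu)⟩

lemma indepNumOn_sdiff_closedNbhdOn_add_one (hs : s ∈ G.maxIndepSetsOn A) (hu : u ∈ s) :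
    G.indepNumOn (A \ G.closedNbhdOn A u) + 1 = G.indepNumOn A := by
  obtain ⟨hsA, hsI, hscard⟩ := mem_maxIndepSetsOn.1 hs
  apply le_antisymm
  · obtain ⟨t, ht⟩ := G.maxIndepSetsOn_nonempty (A \ G.closedNbhdOn A u)
    obtain ⟨htA, htI, htcard⟩ := mem_maxIndepSetsOn.1 ht
    have hut : u ∉ t := fun h => (mem_sdiff.1 (htA h)).2 mem_closedNbhdOn_self
    have hI : G.IsIndepSet (insert u t : Finset V) := by
      rw [coe_insert, isIndepSet_insert]
      refine ⟨htI, fun b hb _ hub => (mem_sdiff.1 (htA hb)).2 (mem_insert_of_mem ?_)⟩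
      exact mem_filter.2 ⟨(mem_sdiff.1 (htA hb)).1, hub⟩
    have := hI.card_le_indepNumOn (insert_subset (hsA hu) (htA.trans sdiff_subset))
    rwa [card_insert_of_notMem hut, htcard] at this
  · have := IsIndepSet.card_le_indepNumOn (hsI.mono (coe_subset.2 (erase_subset u s)))
      (erase_subset_sdiff_closedNbhdOn hsA hsI hu)
    rw [card_erase_of_mem hu] at this
    omega

lemma erase_mem_maxIndepSetsOn_sdiff_closedNbhdOn (hs : s ∈ G.maxIndepSetsOn A)
    (hu : u ∈ s) :
    s.erase u ∈ G.maxIndepSetsOn (A \ G.closedNbhdOn A u) := by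
  obtain ⟨hsA, hsI, hscard⟩ := mem_maxIndepSetsOn.1 hs
  have := indepNumOn_sdiff_closedNbhdOn_add_one hs hu
  refine mem_maxIndepSetsOn.2 ⟨erase_subset_sdiff_closedNbhdOn hsA hsI hu,
    hsI.mono (coe_subset.2 (erase_subset u s)), ?_⟩
  rw [card_erase_of_mem hu]
  omega

lemma card_filter_mem_maxIndepSetsOn_le (u : V) (A : Finset V) :
    #{s ∈ G.maxIndepSetsOn A | u ∈ s} ≤ #(G.maxIndepSetsOn (A \ G.closedNbhdOn A u)) := by
  refine card_le_card_of_injOn (fun s => s.erase u) (fun s hs => ?_) (fun s hs t ht hst => ?_)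
  · obtain ⟨hs, hu⟩ := mem_filter.1 hs
    exact erase_mem_maxIndepSetsOn_sdiff_closedNbhdOn hs hu
  · rw [← insert_erase (mem_filter.1 hs).2, ← insert_erase (mem_filter.1 ht).2]
    exact congrArg (insert u) hst

lemma card_maxIndepSetsOn_le_sum (hv : v ∈ A) :
    #(G.maxIndepSetsOn A) ≤
      ∑ u ∈ G.closedNbhdOn A v, #{s ∈ G.maxIndepSetsOn A | u ∈ s} := by
  refine (card_le_card fun s hs => ?_).trans card_biUnion_le
  obtain ⟨u, hu, hus⟩ := exists_mem_closedNbhdOn_of_mem_maxIndepSetsOn hv hs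
  exact mem_biUnion.2 ⟨u, hu, mem_filter.2 ⟨hs, hus⟩⟩

lemma sdiff_closedNbhdOn_ssubset (hu : u ∈ A) : A \ G.closedNbhdOn A u ⊂ A :=
  ssubset_of_subset_of_ne sdiff_subset fun h => (mem_sdiff.1 (h ▸ hu)).2 mem_closedNbhdOn_self

lemma card_sdiff_closedNbhdOn (hu : u ∈ A) :
    #(A \ G.closedNbhdOn A u) = #A - #(G.closedNbhdOn A u) :=
  card_sdiff_of_subset (closedNbhdOn_subset hu)

theorem card_maxIndepSetsOn_le_balancedProd (A : Finset V) :
    #(G.maxIndepSetsOn A) ≤ balancedProd #A (G.indepNumOn A) := by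
  induction A using Finset.strongInduction with
  | H A ih =>
  obtain rfl | hA := A.eq_empty_or_nonempty
  · have h0 : G.indepNumOn ∅ = 0 := Nat.le_zero.1 (indepNumOn_le_card ∅)
    calc #(G.maxIndepSetsOn ∅) ≤ #(∅ : Finset V).powerset := card_le_card (filter_subset _ _)
      _ = balancedProd #∅ (G.indepNumOn ∅) := by simp [h0, balancedProd]
  obtain ⟨v, hv, hvmin⟩ := A.exists_min_image (fun u => #(G.closedNbhdOn A u)) hA
  obtain ⟨s₀, hs₀⟩ := G.maxIndepSetsOn_nonempty A
  obtain ⟨u₀, -, hu₀⟩ := exists_mem_closedNbhdOn_of_mem_maxIndepSetsOn hv hs₀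
  set β := G.indepNumOn (A \ G.closedNbhdOn A u₀)
  have hβ : β + 1 = G.indepNumOn A := indepNumOn_sdiff_closedNbhdOn_add_one hs₀ hu₀
  have hbound : ∀ u ∈ G.closedNbhdOn A v,
      #{s ∈ G.maxIndepSetsOn A | u ∈ s} ≤ balancedProd (#A - #(G.closedNbhdOn A v)) β := by
    intro u _
    obtain hempty | ⟨s, hs⟩ := {s ∈ G.maxIndepSetsOn A | u ∈ s}.eq_empty_or_nonempty
    · simp [hempty]
    obtain ⟨hs, hus⟩ := mem_filter.1 hs
    have huA : u ∈ A := (mem_maxIndepSetsOn.1 hs).1 hus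
    -- `u` lies in some maximum independent set, so `A \ N[u]` has independence number `α - 1`
    have hβu : G.indepNumOn (A \ G.closedNbhdOn A u) = β :=
      Nat.add_right_cancel ((indepNumOn_sdiff_closedNbhdOn_add_one hs hus).trans hβ.symm)
    calc #{s ∈ G.maxIndepSetsOn A | u ∈ s}
        ≤ #(G.maxIndepSetsOn (A \ G.closedNbhdOn A u)) := card_filter_mem_maxIndepSetsOn_le u A
      _ ≤ balancedProd #(A \ G.closedNbhdOn A u) β :=
        hβu ▸ ih _ (sdiff_closedNbhdOn_ssubset huA)
      _ ≤ balancedProd (#A - #(G.closedNbhdOn A v)) β :=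
        balancedProd_mono β (by rw [card_sdiff_closedNbhdOn huA]; have := hvmin u huA; omega)
  calc #(G.maxIndepSetsOn A)
      ≤ ∑ u ∈ G.closedNbhdOn A v, #{s ∈ G.maxIndepSetsOn A | u ∈ s} :=
        card_maxIndepSetsOn_le_sum hv
    _ ≤ #(G.closedNbhdOn A v) * balancedProd (#A - #(G.closedNbhdOn A v)) β := by
        simpa using sum_le_sum hbound
    _ ≤ balancedProd (#(G.closedNbhdOn A v) + (#A - #(G.closedNbhdOn A v))) (β + 1) :=
        mul_balancedProd_le _ _ _
    _ = balancedProd #A (G.indepNumOn A) := by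
        rw [hβ, Nat.add_sub_cancel' (card_le_card (closedNbhdOn_subset hv))]

end SimpleGraph

lemma SimpleGraph.indepNumOn_univ {V : Type*} [Fintype V] [DecidableEq V] (G : SimpleGraph V)
    [DecidableRel G.Adj] : G.indepNumOn univ = G.indepNum := by
  refine le_antisymm
    (Finset.sup_le fun s hs => IsIndepSet.card_le_indepNum (mem_filter.1 hs).2) ?_
  obtain ⟨s, hs⟩ := G.exists_isNIndepSet_indepNum
  exact hs.card_eq ▸ hs.isIndepSet.card_le_indepNumOn (subset_univ s)

lemma indepNum_eq_simpleGraph_indepNum {V : Type*} (G : SimpleGraph V) :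
    _root_.indepNum G = G.indepNum := by
  simp only [_root_.indepNum, SimpleGraph.indepNum, isNIndepSet_iff]
  rfl

lemma numMaxIndep_eq_card_maxIndepSetsOn_univ {V : Type*} [Fintype V] [DecidableEq V]
    (G : SimpleGraph V) [DecidableRel G.Adj] : numMaxIndep G = #(G.maxIndepSetsOn univ) := by
  rw [numMaxIndep, ← Set.ncard_coe_finset]
  congr 1
  ext s
  simp [mem_maxIndepSetsOn, indepNumOn_univ, indepNum_eq_simpleGraph_indepNum,
    SimpleGraph.IsIndepSet']

theorem stmt0_general {V : Type*} [Fintype V] (G : SimpleGraph V) (n α : ℕ)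
    (hn : Fintype.card V = n) (hα : _root_.indepNum G = α) :
    numMaxIndep G ≤ (n ⌈/⌉ α) ^ (n % α) * (n / α) ^ (α - n % α) := by
  classical
  have hαG : G.indepNumOn univ = α := by
    rw [indepNumOn_univ, ← hα, indepNum_eq_simpleGraph_indepNum]
  have hpos : 0 < n → 0 < α := fun h => by
    obtain ⟨v⟩ : Nonempty V := Fintype.card_pos_iff.1 (hn ▸ h)
    simpa [hαG, Nat.one_le_iff_ne_zero, Nat.pos_iff_ne_zero] using
      IsIndepSet.card_le_indepNumOn (G := G) (by simp) (subset_univ {v})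
  rw [numMaxIndep_eq_card_maxIndepSetsOn_univ, ← balancedProd_eq_ceilDiv hpos, ← hn, ← hαG,
    ← card_univ]
  exact G.card_maxIndepSetsOn_le_balancedProd univ

theorem stmt0 {V : Type*} [Fintype V] (G : SimpleGraph V) (n α : ℕ)
    (hn : Fintype.card V = n) (hα : _root_.indepNum G = α) (hlt : α < n) :
    numMaxIndep G ≤ (n ⌈/⌉ α) ^ (n % α) * (n / α) ^ (α - n % α) :=
  stmt0_general G n α hn hα
end

section
/- Let n, q, p be integers with 2 ≤ q < p ≤ n. If G is a graph of order n with no clique of order p, then the number of cliques of order q in G is at most the number of cliques of order q in the Turán graph T_{p−1}(n). -/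
open SimpleGraph

/-- The number of cliques of order `q` in a graph. -/
noncomputable def numCliques {V : Type*} (G : SimpleGraph V) (q : ℕ) : ℕ :=
  {s : Finset V | G.IsNClique q s}.ncard

/-!
Zykov symmetrization. Weight each clique `T` (the empty one included) by `w #T`, with a weight `w`
positive at `2`. Replacing a vertex `t` by a clone of a vertex `s` changes the total weight by the
weight of the cliques through `s` avoiding `t` minus that of the cliques through `t`. In a
`p`-clique-free graph of maximal weight this forces non-adjacency to be transitive, so the graph
is complete multipartite; its parts are balanced, since moving a vertex of a part into a part
smaller by two would gain weight, and there are `min n (p - 1)` of them, since an edge between two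
parts would gain weight as well. So the maximiser is the Turán graph. Choosing `w q = 2 ^ n + 2`
and `w j = 1` otherwise, the weight of `q`-cliques dominates the at most `2 ^ n` cliques, so the
maximiser also has the most `q`-cliques.
-/

open Finset

namespace SimpleGraph

variable {V : Type*} (G : SimpleGraph V)

noncomputable def cliquesIn (U : Finset V) : Finset (Finset V) := by
  classical exact {T ∈ U.powerset | G.IsClique (T : Set V)}

noncomputable def cliqueWeight (f : ℕ → ℕ) (U : Finset V) : ℕ :=
  ∑ T ∈ G.cliquesIn U, f #T

variable {G} {H : SimpleGraph V} {f : ℕ → ℕ} {U X C : Finset V} {x : V}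

lemma mem_cliquesIn {T : Finset V} :
    T ∈ G.cliquesIn U ↔ T ⊆ U ∧ G.IsClique (T : Set V) := by
  classical
  simp [cliquesIn]

lemma card_cliquesIn_le : #(G.cliquesIn U) ≤ 2 ^ #U :=
  (card_le_card fun _ hT ↦ mem_powerset.2 (mem_cliquesIn.1 hT).1).trans (card_powerset U).le

lemma apply_zero_le_cliqueWeight : f 0 ≤ G.cliqueWeight f U :=
  single_le_sum (f := fun T ↦ f #T) (fun _ _ ↦ Nat.zero_le _)
    (mem_cliquesIn.2 ⟨empty_subset U, by simp⟩)

lemma cliqueWeight_congr (h : ∀ x ∈ U, ∀ y ∈ U, G.Adj x y ↔ H.Adj x y) :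
    G.cliqueWeight f U = H.cliqueWeight f U := by
  refine sum_congr (Finset.ext fun T ↦ ?_) fun _ _ ↦ rfl
  simp only [mem_cliquesIn, and_congr_right_iff]
  refine fun hT ↦ forall₂_congr fun a ha ↦ forall₂_congr fun b hb ↦ ?_
  exact imp_congr_right fun _ ↦ h a (hT ha) b (hT hb)

lemma cliqueWeight_lt_of_lt [Fintype V] (hf : 0 < f 2) (h : G < H) :
    G.cliqueWeight f univ < H.cliqueWeight f univ := by
  classical
  obtain ⟨x, y, hH, hG⟩ : ∃ x y, H.Adj x y ∧ ¬G.Adj x y := by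
    by_contra! hle
    exact h.ne (le_antisymm h.le fun x y ↦ hle x y)
  refine sum_lt_sum_of_subset (fun T hT ↦ ?_) (i := {x, y}) ?_ ?_ ?_ fun _ _ _ ↦ Nat.zero_le _
  · exact mem_cliquesIn.2 ⟨subset_univ T, (mem_cliquesIn.1 hT).2.mono h.le⟩
  · exact mem_cliquesIn.2 ⟨subset_univ _, by simpa using isClique_pair.2 fun _ ↦ hH⟩
  · rw [mem_cliquesIn]
    exact fun hT ↦ hG (hT.2 (by simp) (by simp) hH.ne)
  · rwa [card_pair hH.ne]

lemma cliqueWeight_eq_erase_add [DecidableEq V] [DecidableRel G.Adj] (hx : x ∈ U) :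
    G.cliqueWeight f U = G.cliqueWeight f (U.erase x) +
      G.cliqueWeight (fun j ↦ f (j + 1)) {y ∈ U | G.Adj x y} := by
  unfold cliqueWeight
  rw [← sum_filter_add_sum_filter_not _ (x ∉ ·)]
  congr 1
  · refine sum_congr (Finset.ext fun T ↦ ?_) fun _ _ ↦ rfl
    simp only [mem_filter, mem_cliquesIn, Finset.subset_erase]
    tauto
  · refine sum_nbij' (·.erase x) (insert x) (fun T hT ↦ ?_) (fun T hT ↦ ?_)
      (fun T hT ↦ ?_) (fun T hT ↦ ?_) (fun T hT ↦ ?_)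
    all_goals simp only [mem_filter, mem_cliquesIn, not_not] at hT
    · obtain ⟨⟨hTU, hT⟩, hxT⟩ := hT
      refine mem_cliquesIn.2 ⟨fun y hy ↦ mem_filter.2 ⟨hTU (mem_of_mem_erase hy), ?_⟩, ?_⟩
      · exact hT (mem_coe.2 hxT) (mem_coe.2 (mem_of_mem_erase hy)) (ne_of_mem_erase hy).symm
      · exact hT.subset (by simp)
    · obtain ⟨hTU, hT⟩ := hT
      have hTx : ∀ y ∈ T, y ∈ U ∧ G.Adj x y := fun y hy ↦ mem_filter.1 (hTU hy)
      refine mem_filter.2 ⟨mem_cliquesIn.2 ⟨insert_subset hx fun y hy ↦ (hTx y hy).1, ?_⟩,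
        not_not.2 (mem_insert_self x T)⟩
      rw [coe_insert]
      exact hT.insert fun y hy _ ↦ (hTx y hy).2
    · exact insert_erase hT.2
    · exact erase_insert fun hxT ↦ G.irrefl (mem_filter.1 (hT.1 hxT)).2
    · simp only [card_erase_of_mem hT.2, Nat.sub_add_cancel (card_pos.2 ⟨x, hT.2⟩)]

lemma cliqueWeight_union_of_isIndepSet [DecidableEq V] (hXC : Disjoint X C)
    (hX : G.IsIndepSet (X : Set V)) (hadj : ∀ x ∈ X, ∀ c ∈ C, G.Adj x c) :
    G.cliqueWeight f (X ∪ C) =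
      G.cliqueWeight f C + #X * G.cliqueWeight (fun j ↦ f (j + 1)) C := by
  classical
  induction X using Finset.induction_on with
  | empty => simp
  | insert a X ha ih =>
    have haC : a ∉ C := Finset.disjoint_left.1 hXC (mem_insert_self a X)
    have hnbhd : {y ∈ insert a X ∪ C | G.Adj a y} = C := by
      ext y
      simp only [mem_filter, mem_union, mem_insert]
      refine ⟨?_, fun hy ↦ ⟨Or.inr hy, hadj a (mem_insert_self a X) y hy⟩⟩
      rintro ⟨(rfl | hyX) | hyC, hay⟩
      · exact absurd hay G.irrefl
      · exact absurd hay (hX (by simp) (by simp [hyX]) hay.ne)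
      · exact hyC
    rw [cliqueWeight_eq_erase_add (mem_union_left C (mem_insert_self a X)), hnbhd, insert_union,
      erase_insert (by simp [ha, haC]), ih (disjoint_of_subset_left (subset_insert a X) hXC)
        (hX.mono (by simp)) fun x hx ↦ hadj x (mem_insert_of_mem hx), card_insert_of_notMem ha]
    ring

section ReplaceVertex

variable [DecidableEq V] {s t : V}

lemma cliqueWeight_replaceVertex_of_notMem (ht : t ∉ U) :
    (G.replaceVertex s t).cliqueWeight f U = G.cliqueWeight f U :=
  cliqueWeight_congr fun _ hx _ hy ↦
    G.adj_replaceVertex_iff_of_ne s (ne_of_mem_of_not_mem hx ht) (ne_of_mem_of_not_mem hy ht)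

variable [Fintype V] [DecidableRel G.Adj]

lemma neighborFinset_replaceVertex_self :
    (G.replaceVertex s t).neighborFinset t = (G.neighborFinset s).erase t := by
  ext y
  rcases eq_or_ne y t with rfl | hy
  · simp
  · simp [G.adj_replaceVertex_iff_of_ne_right s hy, hy]

lemma neighborFinset_replaceVertex_of_not_adj (hx : x ≠ t) (hsx : ¬G.Adj s x) :
    (G.replaceVertex s t).neighborFinset x = (G.neighborFinset x).erase t := by
  ext y
  rcases eq_or_ne y t with rfl | hy
  · simp only [mem_erase, mem_neighborFinset, ne_eq, not_true_eq_false, false_and, iff_false]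
    rwa [adj_comm, G.adj_replaceVertex_iff_of_ne_right s hx]
  · simp [G.adj_replaceVertex_iff_of_ne s hx hy, hy]

/-- Zykov symmetrization. The shifted weight of `G.neighborFinset x` is the weight of the cliques
through `x`. -/
theorem cliqueWeight_replaceVertex_add (s t : V) :
    (G.replaceVertex s t).cliqueWeight f univ +
        G.cliqueWeight (fun j ↦ f (j + 1)) (G.neighborFinset t) =
      G.cliqueWeight f univ +
        G.cliqueWeight (fun j ↦ f (j + 1)) ((G.neighborFinset s).erase t) := by
  rw [cliqueWeight_eq_erase_add (mem_univ t), cliqueWeight_eq_erase_add (G := G) (mem_univ t),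
    ← neighborFinset_eq_filter, ← neighborFinset_eq_filter, neighborFinset_replaceVertex_self,
    cliqueWeight_replaceVertex_of_notMem (notMem_erase t _),
    cliqueWeight_replaceVertex_of_notMem (notMem_erase t _)]
  ring

end ReplaceVertex

section Maximal

variable [Fintype V]

def IsCliqueWeightMaximal (f : ℕ → ℕ) (r : ℕ) (G : SimpleGraph V) : Prop :=
  G.CliqueFree (r + 1) ∧
    ∀ H : SimpleGraph V, H.CliqueFree (r + 1) → H.cliqueWeight f univ ≤ G.cliqueWeight f univ

lemma exists_isCliqueWeightMaximal {r : ℕ} (hG : G.CliqueFree (r + 1)) (f : ℕ → ℕ) :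
    ∃ K : SimpleGraph V, K.IsCliqueWeightMaximal f r := by
  classical
  obtain ⟨K, hK, hmax⟩ := exists_max_image {H : SimpleGraph V | H.CliqueFree (r + 1)}
    (·.cliqueWeight f univ) ⟨G, by simpa using hG⟩
  exact ⟨K, (mem_filter.1 hK).2, fun H hH ↦ hmax H (by simpa using hH)⟩

namespace IsCliqueWeightMaximal

variable [DecidableEq V] [DecidableRel G.Adj] {r : ℕ} (h : G.IsCliqueWeightMaximal f r)
  {s t u : V}
include h

lemma cliqueWeight_erase_le (s t : V) :
    G.cliqueWeight (fun j ↦ f (j + 1)) ((G.neighborFinset s).erase t) ≤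
      G.cliqueWeight (fun j ↦ f (j + 1)) (G.neighborFinset t) := by
  have := G.cliqueWeight_replaceVertex_add (f := f) s t
  have := h.2 _ (h.1.replaceVertex s t)
  omega

lemma cliqueWeight_eq_of_not_adj (hn : ¬G.Adj s t) :
    G.cliqueWeight (fun j ↦ f (j + 1)) (G.neighborFinset s) =
      G.cliqueWeight (fun j ↦ f (j + 1)) (G.neighborFinset t) := by
  refine le_antisymm ?_ ?_
  · simpa [erase_eq_of_notMem, hn] using h.cliqueWeight_erase_le s t
  · simpa [erase_eq_of_notMem, adj_comm, hn] using h.cliqueWeight_erase_le t s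

/-- Cloning `s` onto both ends of an edge `tu` of its non-neighbours would gain the weight of
that edge. -/
lemma not_adj_trans (hf : 0 < f 2) (hts : ¬G.Adj t s) (hsu : ¬G.Adj s u) : ¬G.Adj t u := by
  intro htu
  have hst : s ≠ t := by rintro rfl; exact hsu htu
  have hut : u ≠ t := htu.ne.symm
  have hs : ¬G.Adj s t := fun h ↦ hts h.symm
  have hNs : (G.neighborFinset s).erase t = G.neighborFinset s := erase_eq_of_notMem (by simpa)
  have hG₁ := G.cliqueWeight_replaceVertex_add (f := f) s t
  rw [hNs, h.cliqueWeight_eq_of_not_adj hs] at hG₁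
  have hG₂ := (G.replaceVertex s t).cliqueWeight_replaceVertex_add (f := f) s u
  rw [neighborFinset_replaceVertex_of_not_adj hut hsu,
    neighborFinset_replaceVertex_of_not_adj hst (G.irrefl), hNs,
    erase_eq_of_notMem (s := G.neighborFinset s) (by simpa using hsu),
    cliqueWeight_replaceVertex_of_notMem (notMem_erase t _),
    cliqueWeight_replaceVertex_of_notMem (U := G.neighborFinset s) (by simpa using hs)] at hG₂
  have hsplit := G.cliqueWeight_eq_erase_add (f := fun j ↦ f (j + 1)) (x := t)
    (U := G.neighborFinset u) (by simpa using htu.symm)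
  -- the empty clique of the common neighbourhood of `t` and `u` stands for the edge `tu`
  have hedge :
      f 2 ≤ G.cliqueWeight (fun j ↦ f (j + 1 + 1)) {y ∈ G.neighborFinset u | G.Adj t y} :=
    apply_zero_le_cliqueWeight (f := fun j ↦ f (j + 1 + 1))
  have := h.2 _ ((h.1.replaceVertex s t).replaceVertex s u)
  have := h.cliqueWeight_eq_of_not_adj hsu
  omega

variable (hf : 0 < f 2)
include hf

theorem equivalence_not_adj : Equivalence (¬G.Adj · ·) where
  refl _ := G.irrefl
  symm h' h'' := h' h''.symm
  trans := h.not_adj_trans hf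

def setoid : Setoid V := ⟨_, h.equivalence_not_adj hf⟩

instance : DecidableRel (h.setoid hf).r :=
  inferInstanceAs <| DecidableRel (¬G.Adj · ·)

def finpartition : Finpartition (univ : Finset V) := Finpartition.ofSetoid (h.setoid hf)

lemma not_adj_iff_part_eq :
    ¬G.Adj s t ↔ (h.finpartition hf).part s = (h.finpartition hf).part t := by
  change (h.setoid hf).r s t ↔ _
  rw [← Finpartition.mem_part_ofSetoid_iff_rel]
  let P := h.finpartition hf
  change t ∈ P.part s ↔ P.part s = P.part t
  rw [P.mem_part_iff_part_eq_part (mem_univ t) (mem_univ s), eq_comm]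

lemma adj_iff_part_ne :
    G.Adj s t ↔ (h.finpartition hf).part s ≠ (h.finpartition hf).part t := by
  rw [Ne, ← h.not_adj_iff_part_eq hf, not_not]

lemma mem_iff_part_eq {Y : Finset V} (hY : Y ∈ (h.finpartition hf).parts) :
    s ∈ Y ↔ (h.finpartition hf).part s = Y :=
  ⟨(h.finpartition hf).part_eq_of_mem hY,
    fun hs ↦ hs ▸ (h.finpartition hf).mem_part (mem_univ s)⟩

lemma cliqueWeight_union_of_subset_part {g : ℕ → ℕ} {X Y C : Finset V}
    (hY : Y ∈ (h.finpartition hf).parts) (hXY : X ⊆ Y)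
    (hC : ∀ c ∈ C, (h.finpartition hf).part c ≠ Y) :
    G.cliqueWeight g (X ∪ C) =
      G.cliqueWeight g C + #X * G.cliqueWeight (fun j ↦ g (j + 1)) C := by
  have hpart : ∀ x ∈ X, (h.finpartition hf).part x = Y := fun x hx ↦
    (h.mem_iff_part_eq hf hY).1 (hXY hx)
  refine cliqueWeight_union_of_isIndepSet
    (Finset.disjoint_left.2 fun x hx hxC ↦ hC x hxC (hpart x hx))
    (fun x hx y hy _ ↦ (h.not_adj_iff_part_eq hf).2 ?_) fun x hx c hc ↦ ?_
  · rw [hpart x hx, hpart y hy]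
  · rw [h.adj_iff_part_ne hf, hpart x hx]
    exact (hC c hc).symm

/-- Moving a vertex `w` from a part `B` into a part `A` with `#A + 1 < #B` would gain weight: the
cliques through `w` pick at most one vertex of `A`, those through its new neighbourhood at most one
vertex of `B \ {w}`. -/
theorem isEquipartition : (h.finpartition hf).IsEquipartition := by
  by_contra hn
  obtain ⟨B, hB, A, hA, hcard⟩ := Finpartition.not_isEquipartition.1 hn
  obtain ⟨w, hw⟩ := (h.finpartition hf).nonempty_of_mem_parts hB
  obtain ⟨v, hv⟩ := (h.finpartition hf).nonempty_of_mem_parts hA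
  have hAB : A ≠ B := by rintro rfl; omega
  have hvA := (h.mem_iff_part_eq hf hA).1 hv
  have hwB := (h.mem_iff_part_eq hf hB).1 hw
  set C : Finset V := {y | (h.finpartition hf).part y ≠ A ∧ (h.finpartition hf).part y ≠ B}
  have hCA : ∀ c ∈ C, (h.finpartition hf).part c ≠ A := fun c hc ↦ (mem_filter.1 hc).2.1
  have hCB : ∀ c ∈ C, (h.finpartition hf).part c ≠ B := fun c hc ↦ (mem_filter.1 hc).2.2
  have hNw : G.neighborFinset w = A ∪ C := by
    ext y
    simp only [mem_neighborFinset, h.adj_iff_part_ne hf, mem_union, h.mem_iff_part_eq hf hA,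
      mem_filter, mem_univ, true_and, C, hwB]
    grind
  have hNv : (G.neighborFinset v).erase w = B.erase w ∪ C := by
    ext y
    simp only [mem_erase, mem_neighborFinset, h.adj_iff_part_ne hf, mem_union,
      h.mem_iff_part_eq hf hB, mem_filter, mem_univ, true_and, C, hvA]
    grind
  have hle := h.cliqueWeight_erase_le v w
  rw [hNw, hNv, h.cliqueWeight_union_of_subset_part hf hA subset_rfl hCA,
    h.cliqueWeight_union_of_subset_part hf hB (erase_subset w B) hCB, card_erase_of_mem hw] at hle
  have hpos : 0 < G.cliqueWeight (fun j ↦ f (j + 1 + 1)) C :=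
    hf.trans_le (apply_zero_le_cliqueWeight (f := fun j ↦ f (j + 1 + 1)))
  have := Nat.le_of_mul_le_mul_right (Nat.le_of_add_le_add_left hle) hpos
  omega

lemma card_parts_le : #(h.finpartition hf).parts ≤ r := by
  by_contra! l
  obtain ⟨z, -, hz⟩ := (h.finpartition hf).exists_subset_part_bijOn
  have ncf : ¬G.CliqueFree #z := by
    refine IsNClique.not_cliqueFree ⟨fun v hv w hw hn ↦ ?_, rfl⟩
    contrapose hn
    exact hz.injOn hv hw (by rwa [← h.not_adj_iff_part_eq hf])
  rw [Finset.card_eq_of_equiv hz.equiv] at ncf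
  exact absurd (h.1.mono (Nat.succ_le_of_lt l)) ncf

theorem card_parts : #(h.finpartition hf).parts = min (Fintype.card V) r := by
  set P := h.finpartition hf
  refine le_antisymm (le_min P.card_parts_le_card (h.card_parts_le hf)) ?_
  by_contra! l
  rw [lt_min_iff] at l
  obtain ⟨x, -, y, -, hn, he⟩ :=
    exists_ne_map_eq_of_card_lt_of_maps_to l.1 fun a _ ↦ P.part_mem.2 (mem_univ a)
  have cf : G.CliqueFree r := by
    simp_rw [← cliqueFinset_eq_empty_iff, cliqueFinset, filter_eq_empty_iff, mem_univ,
      forall_true_left, isNClique_iff, and_comm, not_and, isClique_iff, Set.Pairwise]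
    intro z zc
    push Not
    simp_rw [h.not_adj_iff_part_eq hf]
    exact exists_ne_map_eq_of_card_lt_of_maps_to (zc.symm ▸ l.2) fun a _ ↦
      P.part_mem.2 (mem_univ a)
  exact (h.2 _ (cf.sup_edge x y)).not_gt
    (cliqueWeight_lt_of_lt hf (G.lt_sup_edge _ _ hn ((h.not_adj_iff_part_eq hf).2 he)))

theorem nonempty_iso_turanGraph : Nonempty (G ≃g turanGraph (Fintype.card V) r) := by
  obtain ⟨zm, zp⟩ := (h.isEquipartition hf).exists_partPreservingEquiv
  use (Equiv.subtypeUnivEquiv mem_univ).symm.trans zm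
  intro a b
  simp only [turanGraph]
  have := zp ⟨a, mem_univ a⟩ ⟨b, mem_univ b⟩
  rw [← h.not_adj_iff_part_eq hf] at this
  rw [← not_iff_not, not_ne_iff, this, h.card_parts hf]
  rcases le_or_gt r (Fintype.card V) with c | c
  · rw [min_eq_right c]; rfl
  · have lc : ∀ x, zm ⟨x, _⟩ < Fintype.card V := fun x ↦ (zm ⟨x, mem_univ x⟩).2
    rw [min_eq_left c.le, Nat.mod_eq_of_lt (lc a), Nat.mod_eq_of_lt (lc b),
      ← Nat.mod_eq_of_lt ((lc a).trans c), ← Nat.mod_eq_of_lt ((lc b).trans c)]; rfl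

end IsCliqueWeightMaximal

end Maximal

section NumCliques

variable {W : Type*} {H : SimpleGraph W}

lemma Iso.map_eq (e : G ≃g H) : G.map e.toEmbedding.toEmbedding = H := by
  ext a b
  rw [map_adj]
  constructor
  · rintro ⟨a, b, hab, rfl, rfl⟩
    exact e.map_adj_iff.2 hab
  · exact fun hab ↦ ⟨e.symm a, e.symm b, e.symm.map_adj_iff.2 hab, e.apply_symm_apply a,
      e.apply_symm_apply b⟩

lemma Iso.isNClique_map (e : G ≃g H) {q : ℕ} {s : Finset V} (hs : G.IsNClique q s) :
    H.IsNClique q (s.map e.toEmbedding.toEmbedding) := by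
  simpa only [e.map_eq] using hs.map (f := e.toEmbedding.toEmbedding)

lemma Iso.numCliques_eq (e : G ≃g H) (q : ℕ) : numCliques G q = numCliques H q := by
  refine Set.ncard_congr (fun s _ ↦ s.map e.toEmbedding.toEmbedding)
    (fun s hs ↦ e.isNClique_map hs) (fun s t _ _ hst ↦ Finset.map_injective _ hst)
    fun t ht ↦ ⟨t.map e.symm.toEmbedding.toEmbedding, e.symm.isNClique_map ht, ?_⟩
  rw [Finset.map_map]
  convert Finset.map_refl
  ext a
  exact e.apply_symm_apply a

variable [Fintype V] {q M : ℕ}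

lemma numCliques_eq_card_filter_cliquesIn :
    numCliques G q = #{T ∈ G.cliquesIn univ | #T = q} := by
  rw [numCliques, ← Set.ncard_coe_finset]
  congr
  ext T
  simp [mem_cliquesIn, isNClique_iff]

lemma cliqueWeight_ite_add_one :
    G.cliqueWeight (fun j ↦ (if j = q then M else 0) + 1) univ =
      M * numCliques G q + #(G.cliquesIn univ) := by
  simp [cliqueWeight, sum_add_distrib, sum_ite, numCliques_eq_card_filter_cliquesIn, mul_comm]

lemma numCliques_le_of_cliqueWeight_le {G' : SimpleGraph V} (hM : 2 ^ Fintype.card V < M)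
    (h : G.cliqueWeight (fun j ↦ (if j = q then M else 0) + 1) univ ≤
      G'.cliqueWeight (fun j ↦ (if j = q then M else 0) + 1) univ) :
    numCliques G q ≤ numCliques G' q := by
  rw [cliqueWeight_ite_add_one, cliqueWeight_ite_add_one] at h
  have := (card_cliquesIn_le (G := G') (U := univ)).trans_lt (card_univ (α := V) ▸ hM)
  by_contra! hlt
  have := Nat.mul_le_mul_left M (Nat.succ_le_of_lt hlt)
  rw [Nat.succ_eq_add_one, mul_add_one] at this
  omega

end NumCliques

end SimpleGraph

theorem stmt2_general (n q p : ℕ)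
    {V : Type*} [Fintype V] (G : SimpleGraph V) (hn : Fintype.card V = n)
    (hfree : G.CliqueFree p) :
    numCliques G q ≤ numCliques (turanGraph n (p - 1)) q := by
  classical
  subst hn
  obtain ⟨r, rfl⟩ : ∃ r, p = r + 1 :=
    Nat.exists_eq_add_one_of_ne_zero fun hp ↦ not_cliqueFree_zero (hp ▸ hfree)
  set w : ℕ → ℕ := fun j ↦ (if j = q then 2 ^ Fintype.card V + 1 else 0) + 1
  obtain ⟨K, hK⟩ := exists_isCliqueWeightMaximal hfree w
  obtain ⟨e⟩ := hK.nonempty_iso_turanGraph (Nat.succ_pos _ : 0 < w 2)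
  calc numCliques G q ≤ numCliques K q :=
        numCliques_le_of_cliqueWeight_le (Nat.lt_succ_self _) (hK.2 G hfree)
    _ = numCliques (turanGraph (Fintype.card V) (r + 1 - 1)) q := e.numCliques_eq q

theorem stmt2 (n q p : ℕ) (h2 : 2 ≤ q) (hqp : q < p) (hpn : p ≤ n)
    {V : Type*} [Fintype V] (G : SimpleGraph V) (hn : Fintype.card V = n)
    (hfree : G.CliqueFree p) :
    numCliques G q ≤ numCliques (turanGraph n (p - 1)) q :=
  stmt2_general n q p G hn hfree
end

section
/- If T is a tree of order n with independence number α satisfying 2α = n, then the number of maximum independent sets of T is at most 2^(n−α−1) + 1. -/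
open SimpleGraph

/-
In a proper 2-colouring of a tree with `2 α = n` both colour classes are maximum independent
sets. Hence two leaves never share a neighbour (trade the neighbour for both leaves in its colour
class), and counting degrees then gives, for `n ≥ 3`, a leaf `v` whose neighbour `u` has exactly
one other neighbour `p`. Deleting `v` and `u` leaves a tree `T'` with `α(T') = α - 1`, again
balanced. A maximum independent set of `T` is one of `T'` together with `v` or with `u`, and in
the second case it avoids `p`, so it is not the colour class of `T'` containing `p`. Writing `N`
for the number of maximum independent sets, `N(T) ≤ 2 N(T') - 1`, and induction gives
`N(T) ≤ 2 ^ (α - 1) + 1`.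
-/

open Finset

namespace SimpleGraph

variable {V : Type*} {G : SimpleGraph V}

lemma indepNum_eq_indepNum : _root_.indepNum G = G.indepNum := by
  simp only [_root_.indepNum, SimpleGraph.indepNum, isNIndepSet_iff, IsIndepSet']

lemma numMaxIndep_eq_ncard : numMaxIndep G = (G.indepSetSet G.indepNum).ncard := by
  simp only [numMaxIndep, indepSetSet, isNIndepSet_iff, IsIndepSet', indepNum_eq_indepNum]

lemma IsIndepSet.insert_of_neighborSet_eq {s : Set V} {v u : V} (hs : G.IsIndepSet s)
    (hv : G.neighborSet v = {u}) (hu : u ∉ s) : G.IsIndepSet (insert v s) := by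
  have hadj : ∀ x, G.Adj v x → x = u := fun x hx => by
    simpa [hv] using (show x ∈ G.neighborSet v from hx)
  refine hs.insert fun x hx _ => ⟨fun h => hu (hadj x h ▸ hx), fun h => hu (hadj x h.symm ▸ hx)⟩

lemma IsIndepSet.map_subtype {s : Set V} {S : Finset s} (h : (G.induce s).IsIndepSet S) :
    G.IsIndepSet (S.map (Function.Embedding.subtype _)) := by
  simpa [Set.Pairwise] using h

lemma IsIndepSet.subtype {s : Set V} [DecidablePred (· ∈ s)] {S : Finset V}
    (h : G.IsIndepSet S) : (G.induce s).IsIndepSet (S.subtype (· ∈ s)) := by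
  intro x hx y hy hxy
  exact h (by simpa using hx) (by simpa using hy) (Subtype.coe_ne_coe.2 hxy)

section Pendant

variable {u v p : V}

lemma adj_of_neighborSet_eq_singleton (hv : G.neighborSet v = {u}) : G.Adj v u :=
  show u ∈ G.neighborSet v by simp [hv]

lemma exists_isIndepSet_induce_compl_pair [DecidableEq V] (hv : G.neighborSet v = {u})
    {S : Finset V} (hS : G.IsIndepSet S) {x : V} (hxS : x ∈ S) (hx : x = v ∨ x = u) :
    ∃ S' : Finset ({v, u}ᶜ : Set V), (G.induce {v, u}ᶜ).IsIndepSet S' ∧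
      insert x (S'.map (Function.Embedding.subtype _)) = S := by
  classical
  refine ⟨S.subtype (· ∈ ({v, u}ᶜ : Set V)), hS.subtype, ?_⟩
  have hvu : ¬ (v ∈ S ∧ u ∈ S) := fun h =>
    hS h.1 h.2 (adj_of_neighborSet_eq_singleton hv).ne (adj_of_neighborSet_eq_singleton hv)
  rw [Finset.subtype_map]
  ext y
  simp only [Finset.mem_insert, Finset.mem_filter, Set.mem_compl_iff, Set.mem_insert_iff,
    Set.mem_singleton_iff]
  constructor
  · rintro (rfl | ⟨hy, -⟩) <;> assumption
  · intro hy
    by_cases hy' : y = v ∨ y = u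
    · left
      rcases hx with rfl | rfl <;> rcases hy' with rfl | rfl <;> tauto
    · exact .inr ⟨hy, hy'⟩

lemma card_insert_map_subtype_compl_pair [DecidableEq V] {S' : Finset ({v, u}ᶜ : Set V)}
    {x : V} (hx : x = v ∨ x = u) : #(insert x (S'.map (Function.Embedding.subtype _))) = #S' + 1 := by
  rw [Finset.card_insert_of_notMem, Finset.card_map]
  simp only [Finset.mem_map, Function.Embedding.coe_subtype, not_exists, not_and]
  rintro ⟨y, hy⟩ - rfl
  simp only [Set.mem_compl_iff, Set.mem_insert_iff, Set.mem_singleton_iff] at hy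
  exact hy hx

variable [Finite V]

lemma mem_or_mem_of_isNIndepSet_indepNum (hv : G.neighborSet v = {u}) {S : Finset V}
    (hS : G.IsNIndepSet G.indepNum S) : v ∈ S ∨ u ∈ S := by
  classical
  by_contra! h
  have hind : G.IsIndepSet (insert v S : Finset V) := by
    rw [Finset.coe_insert]
    exact hS.isIndepSet.insert_of_neighborSet_eq hv (by simpa using h.2)
  have := hind.card_le_indepNum
  rw [Finset.card_insert_of_notMem h.1, hS.card_eq] at this
  omega

lemma indepNum_induce_compl_pair_add_one (hv : G.neighborSet v = {u}) :
    (G.induce {v, u}ᶜ).indepNum + 1 = G.indepNum := by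
  classical
  apply le_antisymm
  · obtain ⟨S', hS'⟩ := (G.induce {v, u}ᶜ).exists_isNIndepSet_indepNum
    have hind : G.IsIndepSet (insert v (S'.map (Function.Embedding.subtype _)) : Finset V) := by
      rw [Finset.coe_insert]
      refine hS'.isIndepSet.map_subtype.insert_of_neighborSet_eq hv ?_
      simp
    have := hind.card_le_indepNum
    rwa [card_insert_map_subtype_compl_pair (.inl rfl), hS'.card_eq] at this
  · obtain ⟨S, hS⟩ := G.exists_isNIndepSet_indepNum
    obtain ⟨x, hxS, hx⟩ : ∃ x ∈ S, x = v ∨ x = u := by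
      rcases mem_or_mem_of_isNIndepSet_indepNum hv hS with h | h <;> exact ⟨_, h, by simp⟩
    obtain ⟨S', hS', rfl⟩ := exists_isIndepSet_induce_compl_pair hv hS.isIndepSet hxS hx
    rw [← hS.card_eq, card_insert_map_subtype_compl_pair hx]
    exact Nat.add_le_add_right hS'.card_le_indepNum 1

lemma ncard_indepSetSet_indepNum_add_one_le (hv : G.neighborSet v = {u})
    (hu : G.neighborSet u = {v, p}) {B : Finset ({v, u}ᶜ : Set V)}
    (hB : (G.induce {v, u}ᶜ).IsNIndepSet (G.induce {v, u}ᶜ).indepNum B)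
    (hpB : p ∈ B.map (Function.Embedding.subtype _)) :
    (G.indepSetSet G.indepNum).ncard + 1 ≤
      2 * ((G.induce {v, u}ᶜ).indepSetSet (G.induce {v, u}ᶜ).indepNum).ncard := by
  classical
  set M' := (G.induce {v, u}ᶜ).indepSetSet (G.induce {v, u}ᶜ).indepNum
  set f : Finset ({v, u}ᶜ : Set V) → Finset V := fun S' => S'.map (Function.Embedding.subtype _)
  have hα := indepNum_induce_compl_pair_add_one hv
  have restrict : ∀ S ∈ G.indepSetSet G.indepNum, ∀ x ∈ S, (x = v ∨ x = u) →
      ∃ S' ∈ M', insert x (f S') = S := by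
    intro S hS x hxS hx
    obtain ⟨S', hS', rfl⟩ := exists_isIndepSet_induce_compl_pair hv hS.isIndepSet hxS hx
    refine ⟨S', ⟨hS', ?_⟩, rfl⟩
    have := hS.card_eq
    rw [card_insert_map_subtype_compl_pair hx] at this
    omega
  have hcover : G.indepSetSet G.indepNum ⊆
      (insert v ∘ f) '' M' ∪ (insert u ∘ f) '' (M' \ {B}) := by
    intro S hS
    rcases mem_or_mem_of_isNIndepSet_indepNum hv hS with hvS | huS
    · obtain ⟨S', hS', rfl⟩ := restrict S hS v hvS (.inl rfl)
      exact .inl ⟨S', hS', rfl⟩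
    · obtain ⟨S', hS', rfl⟩ := restrict S hS u huS (.inr rfl)
      refine .inr ⟨S', ⟨hS', ?_⟩, rfl⟩
      rintro rfl
      have hup : G.Adj u p := show p ∈ G.neighborSet u by simp [hu]
      exact hS.isIndepSet (by simp) (Finset.mem_insert_of_mem hpB) hup.ne hup
  have hBM' : B ∈ M' := hB
  have hM' : 0 < M'.ncard := (Set.ncard_pos (Set.toFinite _)).2 ⟨B, hBM'⟩
  calc (G.indepSetSet G.indepNum).ncard + 1
      ≤ ((insert v ∘ f) '' M').ncard + ((insert u ∘ f) '' (M' \ {B})).ncard + 1 :=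
        Nat.add_le_add_right ((Set.ncard_le_ncard hcover (Set.toFinite _)).trans
          (Set.ncard_union_le _ _)) 1
    _ ≤ M'.ncard + (M' \ {B}).ncard + 1 := by
        gcongr <;> exact Set.ncard_image_le (Set.toFinite _)
    _ = 2 * M'.ncard := by
        rw [Set.ncard_sdiff_singleton_of_mem hBM']
        omega

end Pendant

section Bipartite

variable [Fintype V]

lemma Coloring.isNIndepSet_filter_eq (C : G.Coloring (Fin 2))
    (h : 2 * G.indepNum = Fintype.card V) (x : V) :
    G.IsNIndepSet G.indepNum {y | C y = C x} := by
  have same : G.IsIndepSet ({y | C y = C x} : Finset V) := by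
    intro a ha b hb _ hab
    simp only [coe_filter, Finset.mem_univ, true_and, Set.mem_ofPred_eq] at ha hb
    exact C.valid hab (ha.trans hb.symm)
  have other : G.IsIndepSet ({y | ¬ C y = C x} : Finset V) := by
    intro a ha b hb _ hab
    simp only [coe_filter, Finset.mem_univ, true_and, Set.mem_ofPred_eq] at ha hb
    have fin_two : ∀ i j k : Fin 2, i ≠ k → j ≠ k → i = j := by decide
    exact C.valid hab (fin_two _ _ _ ha hb)
  have hsum := card_filter_add_card_filter_not (s := univ) (fun y => C y = C x)
  have := same.card_le_indepNum
  have := other.card_le_indepNum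
  exact ⟨same, by rw [card_univ] at hsum; omega⟩

lemma Coloring.eq_of_neighborSet_eq_singleton [DecidableEq V] (C : G.Coloring (Fin 2))
    (h : 2 * G.indepNum = Fintype.card V) {v w u : V} (hv : G.neighborSet v = {u})
    (hw : G.neighborSet w = {u}) : v = w := by
  by_contra hvw
  have hB := C.isNIndepSet_filter_eq h u
  set B : Finset V := {y | C y = C u}
  have hvB : v ∉ B := by simpa [B] using C.valid (adj_of_neighborSet_eq_singleton hv)
  have hwB : w ∉ B := by simpa [B] using C.valid (adj_of_neighborSet_eq_singleton hw)
  have huB : u ∈ B := by simp [B]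
  have hind : G.IsIndepSet (insert v (insert w (B.erase u)) : Finset V) := by
    simp only [coe_insert, coe_erase]
    refine IsIndepSet.insert_of_neighborSet_eq ?_ hv ?_
    · have hBu : G.IsIndepSet (↑B \ {u}) := hB.isIndepSet.mono Set.sdiff_subset
      exact hBu.insert_of_neighborSet_eq hw (by simp)
    · simp [(adj_of_neighborSet_eq_singleton hw).ne']
  have := hind.card_le_indepNum
  rw [card_insert_of_notMem (by simp [hvw, hvB]), card_insert_of_notMem (by simp [hwB]),
    card_erase_of_mem huB, hB.card_eq] at this
  have := card_pos.2 ⟨u, huB⟩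
  omega

end Bipartite

section Tree

variable {u v p : V}

lemma IsTree.induce_compl_pair (hT : G.IsTree) (hv : G.neighborSet v = {u})
    (hu : G.neighborSet u = {v, p}) (hpv : p ≠ v) : (G.induce {v, u}ᶜ).IsTree := by
  have hup : G.Adj u p := show p ∈ G.neighborSet u by simp [hu]
  have hu' : u ∈ ({v}ᶜ : Set V) := (adj_of_neighborSet_eq_singleton hv).ne'
  set G₁ := G.induce {v}ᶜ
  have hG₁ : G₁.Preconnected := hT.connected.preconnected.induce_of_degree_eq_one
    (by simp [hv])
  have hG₂ : (G₁.induce {⟨u, hu'⟩}ᶜ).Preconnected := by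
    refine hG₁.induce_of_degree_eq_one ?_
    simp only [Set.mem_compl_iff, Set.mem_singleton_iff, not_not, forall_eq]
    have hnbr : ∀ x, G.Adj u x → x ≠ v → x = p := fun x hx hxv => by
      have : x ∈ G.neighborSet u := hx
      simpa [hu, hxv] using this
    rintro ⟨x, hx⟩ hxu ⟨y, hy⟩ hyu
    simp only [Subtype.mk.injEq]
    exact (hnbr x hxu hx).trans (hnbr y hyu hy).symm
  let f : G₁.induce {⟨u, hu'⟩}ᶜ →g G.induce {v, u}ᶜ :=
    { toFun x := ⟨x.1.1, by
        have hxv := x.1.2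
        have hxu := x.2
        simp only [Set.mem_compl_iff, Set.mem_singleton_iff, Subtype.ext_iff] at hxv hxu
        simp [hxv, hxu]⟩
      map_rel' h := h }
  have : Nonempty ({v, u}ᶜ : Set V) := ⟨⟨p, by simp [hpv, hup.ne']⟩⟩
  refine ⟨⟨hG₂.map f ?_⟩, hT.isAcyclic.induce _⟩
  rintro ⟨x, hx⟩
  simp only [Set.mem_compl_iff, Set.mem_insert_iff, Set.mem_singleton_iff, not_or] at hx
  exact ⟨⟨⟨x, hx.1⟩, by simpa [Subtype.ext_iff] using hx.2⟩, rfl⟩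

variable [Fintype V]

lemma IsTree.card_le_two_of_neighborSet_eq_singleton (hT : G.IsTree)
    (hu : G.neighborSet u = {v}) (hv : G.neighborSet v = {u}) : Fintype.card V ≤ 2 := by
  classical
  have closed : ∀ a b (W : G.Walk a b), (a = u ∨ a = v) → b = u ∨ b = v := by
    intro a b W
    induction W with
    | nil => exact id
    | @cons a c _ hac _ ih =>
      intro ha
      apply ih
      have hc : c ∈ G.neighborSet a := hac
      rcases ha with rfl | rfl
      · simp_all
      · simp_all
  have hsub : (univ : Finset V) ⊆ {u, v} := fun x _ => by
    simpa using closed u x (hT.connected u x).some (.inl rfl)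
  calc Fintype.card V = #(univ : Finset V) := card_univ.symm
    _ ≤ #{u, v} := card_le_card hsub
    _ ≤ 2 := card_le_two

lemma IsTree.three_le_degree_of_neighborSet_eq_singleton [DecidableRel G.Adj] (hT : G.IsTree)
    (h3 : 3 ≤ Fintype.card V) (hv : G.neighborSet v = {u})
    (hu : ∀ p, G.neighborSet u = {v, p} → p = v) : 3 ≤ G.degree u := by
  classical
  have hvu : v ∈ G.neighborFinset u := by
    simpa using (adj_of_neighborSet_eq_singleton hv).symm
  have coe_eq : ∀ s : Finset V, G.neighborFinset u = s → G.neighborSet u = s := fun s hs => by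
    rw [← coe_neighborFinset, hs]
  have hpos : 0 < G.degree u := card_pos.2 ⟨v, hvu⟩
  by_contra! hdeg
  obtain hdeg | hdeg : G.degree u = 1 ∨ G.degree u = 2 := by omega
  · obtain ⟨a, ha⟩ := card_eq_one.1 hdeg
    obtain rfl : v = a := by simpa [ha] using hvu
    have := hT.card_le_two_of_neighborSet_eq_singleton (by simpa using coe_eq _ ha) hv
    omega
  · obtain ⟨a, b, hab, hN⟩ := card_eq_two.1 hdeg
    have hN' := coe_eq _ hN
    rw [coe_pair] at hN'
    rcases (show v = a ∨ v = b by simpa [hN] using hvu) with rfl | rfl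
    · exact hab (hu b hN').symm
    · exact hab (hu a (hN'.trans (Set.pair_comm _ _)))

lemma IsTree.exists_pendant_path (hT : G.IsTree) (h : 2 * G.indepNum = Fintype.card V)
    (h3 : 3 ≤ Fintype.card V) :
    ∃ v u p, G.neighborSet v = {u} ∧ G.neighborSet u = {v, p} ∧ p ≠ v := by
  classical
  obtain ⟨C⟩ := hT.colorable_two
  have : Nontrivial V := Fintype.one_lt_card_iff_nontrivial.1 (by omega)
  by_contra! hno
  -- Leaves have pairwise distinct neighbours, all of degree at least three, which would push
  -- the degree sum up to `2 n`, beyond the `2 (n - 1)` of a tree.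
  have hleaf : ∀ x, G.degree x = 1 → ∃ y, G.neighborSet x = {y} := fun x hx => by
    obtain ⟨y, hy⟩ := card_eq_one.1 hx
    exact ⟨y, by rw [← coe_neighborFinset, hy, coe_singleton]⟩
  choose! nbr hnbr using hleaf
  set L : Finset V := {x | G.degree x = 1}
  set U := L.image nbr
  have hUL : #U = #L := card_image_of_injOn fun x hx y hy hxy =>
    C.eq_of_neighborSet_eq_singleton h (hnbr x (by simpa [L] using hx))
      (hxy ▸ hnbr y (by simpa [L] using hy))
  have hdeg : ∀ x, 2 + (if x ∈ U then 1 else 0) ≤ G.degree x + (if x ∈ L then 1 else 0) := by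
    intro x
    by_cases hxU : x ∈ U
    · obtain ⟨y, hyL, rfl⟩ := mem_image.1 hxU
      have hy := hnbr y (by simpa [L] using hyL)
      have := hT.three_le_degree_of_neighborSet_eq_singleton h3 hy (hno y _ · hy)
      simp only [hxU, if_true]
      omega
    · have := hT.connected.preconnected.degree_pos_of_nontrivial x
      by_cases hxL : x ∈ L <;> simp_all [L]; omega
  have hsum := Finset.sum_le_sum fun x (_ : x ∈ univ) => hdeg x
  simp only [sum_add_distrib, sum_const, card_univ, smul_eq_mul, sum_boole, filter_mem_eq_inter,
    univ_inter, Nat.cast_id, sum_degrees_eq_twice_card_edges] at hsum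
  have := hT.card_edgeFinset
  omega

end Tree

lemma ncard_indepSetSet_one_le [Finite V] (G : SimpleGraph V) :
    (G.indepSetSet 1).ncard ≤ Nat.card V := by
  have hsub : G.indepSetSet 1 ⊆ Set.range ({·}) := fun S hS =>
    let ⟨x, hx⟩ := card_eq_one.1 hS.card_eq
    ⟨x, hx.symm⟩
  exact (Set.ncard_le_ncard hsub (Set.toFinite _)).trans_eq
    (Set.ncard_range_of_injective Finset.singleton_injective)

theorem IsTree.ncard_indepSetSet_indepNum_le [Finite V] (hT : G.IsTree)
    (h : 2 * G.indepNum = Nat.card V) :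
    (G.indepSetSet G.indepNum).ncard ≤ 2 ^ (G.indepNum - 1) + 1 := by
  classical
  induction hn : Nat.card V using Nat.strong_induction_on generalizing V with
  | _ n ih =>
  have := Fintype.ofFinite V
  have := hT.connected.nonempty
  have hpos : 0 < Nat.card V := Nat.card_pos
  by_cases hsmall : n ≤ 2
  · obtain hα : G.indepNum = 1 := by omega
    have := G.ncard_indepSetSet_one_le
    rw [hα]
    omega
  obtain ⟨v, u, p, hv, hu, hpv⟩ := hT.exists_pendant_path
    (by rw [← Nat.card_eq_fintype_card]; omega) (by rw [← Nat.card_eq_fintype_card]; omega)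
  have hup : G.Adj u p := show p ∈ G.neighborSet u by simp [hu]
  have hT' := hT.induce_compl_pair hv hu hpv
  have hα := indepNum_induce_compl_pair_add_one hv
  have hcard : Nat.card ({v, u}ᶜ : Set V) + 2 = n := by
    rw [Nat.card_coe_set_eq, Set.ncard_compl, Set.ncard_pair
      (adj_of_neighborSet_eq_singleton hv).ne, hn]
    omega
  have hbal : 2 * (G.induce {v, u}ᶜ).indepNum = Nat.card ({v, u}ᶜ : Set V) := by omega
  have hrec := ih _ (by omega) hT' hbal rfl
  have := Fintype.ofFinite ({v, u}ᶜ : Set V)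
  obtain ⟨C⟩ := hT'.colorable_two
  have hpV : p ∈ ({v, u}ᶜ : Set V) := by simp [hpv, hup.ne']
  have hB := C.isNIndepSet_filter_eq (by rwa [← Nat.card_eq_fintype_card]) ⟨p, hpV⟩
  have hcount := ncard_indepSetSet_indepNum_add_one_le hv hu hB (by simpa using hpV)
  obtain ⟨k, hk⟩ : ∃ k, (G.induce {v, u}ᶜ).indepNum = k + 1 :=
    Nat.exists_eq_add_one.2 (by omega)
  have hpow : 2 ^ (G.indepNum - 1) = 2 * 2 ^ ((G.induce {v, u}ᶜ).indepNum - 1) := by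
    rw [← hα, hk, Nat.add_sub_cancel, Nat.add_sub_cancel, pow_succ, mul_comm]
  omega

end SimpleGraph

theorem stmt4 {V : Type*} [Fintype V] (T : SimpleGraph V) (hT : T.IsTree) (n α : ℕ)
    (hn : Fintype.card V = n) (hα : _root_.indepNum T = α) (h : 2 * α = n) :
    numMaxIndep T ≤ 2 ^ (n - α - 1) + 1 := by
  rw [SimpleGraph.indepNum_eq_indepNum] at hα
  subst hα hn
  rw [SimpleGraph.numMaxIndep_eq_ncard,
    show Fintype.card V - T.indepNum - 1 = T.indepNum - 1 by omega]
  exact hT.ncard_indepSetSet_indepNum_le (by rwa [Nat.card_eq_fintype_card])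
end

section
/- If T is a subcubic tree of order n with independence number α = n/2, then the number of maximum independent sets of T is at most f(α+2), where f is the Fibonacci sequence (f(0)=0, f(1)=1). -/
open SimpleGraph

/-!
A tree with `α = n / 2` has a perfect matching `f`: peel off a leaf together with its neighbour (a
leaf without a neighbour, added to the larger colour class of the rest, would give an independent
set of more than half the vertices). A maximum independent set then contains exactly one end of
every matching edge.

For a connected vertex set `S` closed under `f`, with `|S| = 2k`, one proves together that `S` has
at most `F(k+2)` maximum independent sets, and at most `F(k+1)` avoiding a given vertex of degree
at most 2 in `S`. Deleting a matched pair `{w, f w}` leaves components, each attached to the pair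
at a single vertex since `T` is acyclic, and the count is at most the product over the components.
For the first bound let `w` be a leaf: a set contains `w` or `f w`, and `f w` has at most two
further neighbours, so `F(a+2)F(b+2) + F(a+1)F(b+1) = F(a+b+3)` closes the induction. For the
second, every set contains `f w`, and `F(a+1)F(b+1) ≤ F(a+b+1)` suffices.
-/

open Finset

open scoped Classical

namespace Nat

lemma fib_add_one_mul_fib_add_one_le (m n : ℕ) : fib (m + 1) * fib (n + 1) ≤ fib (m + n + 1) := by
  rw [fib_add]
  exact Nat.le_add_left _ _

lemma prod_fib_add_one_le {ι : Type*} (s : Finset ι) (x : ι → ℕ) :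
    ∏ i ∈ s, fib (x i + 1) ≤ fib (∑ i ∈ s, x i + 1) := by
  induction s using Finset.induction_on with
  | empty => simp
  | insert i s hi ih =>
    rw [prod_insert hi, sum_insert hi, add_assoc]
    exact (Nat.mul_le_mul_left _ ih).trans (fib_add_one_mul_fib_add_one_le _ _)

lemma prod_fib_add_two_add_prod_fib_add_one {ι : Type*} {s : Finset ι} (hs : #s ≤ 2)
    (x : ι → ℕ) :
    ∏ i ∈ s, fib (x i + 2) + ∏ i ∈ s, fib (x i + 1) = fib (∑ i ∈ s, x i + 3) := by
  interval_cases h : #s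
  · simp [Finset.card_eq_zero.1 h, fib_add_two]
  · obtain ⟨a, rfl⟩ := Finset.card_eq_one.1 h
    rw [prod_singleton, prod_singleton, sum_singleton,
      show x a + 3 = x a + 1 + 2 by ring, fib_add_two (n := x a + 1)]
    ring
  · obtain ⟨a, b, hab, rfl⟩ := Finset.card_eq_two.1 h
    simp only [prod_pair hab, sum_pair hab]
    rw [show x a + x b + 3 = (x a + 1) + (x b + 1) + 1 by ring, fib_add (x a + 1) (x b + 1)]
    ring

end Nat

namespace SimpleGraph

variable {V : Type*} {T : SimpleGraph V}

def restrict (T : SimpleGraph V) (S : Finset V) : SimpleGraph V where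
  Adj a b := a ∈ S ∧ b ∈ S ∧ T.Adj a b
  symm := ⟨fun _ _ h ↦ ⟨h.2.1, h.1, h.2.2.symm⟩⟩

def ConnectedOn (T : SimpleGraph V) (S : Finset V) : Prop :=
  ∀ a ∈ S, ∀ b ∈ S, (T.restrict S).Reachable a b

noncomputable def component (T : SimpleGraph V) (S : Finset V) (x : V) : Finset V :=
  {y ∈ S | (T.restrict S).Reachable x y}

section

variable {S S' : Finset V} {x y z : V}

@[simp]
lemma restrict_adj : (T.restrict S).Adj x y ↔ x ∈ S ∧ y ∈ S ∧ T.Adj x y := Iff.rfl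

lemma restrict_le : T.restrict S ≤ T := fun _ _ h ↦ h.2.2

lemma restrict_mono (h : S ⊆ S') : T.restrict S ≤ T.restrict S' :=
  fun _ _ hxy ↦ ⟨h hxy.1, h hxy.2.1, hxy.2.2⟩

lemma restrict_univ [Fintype V] : T.restrict univ = T := by
  ext; simp

lemma Walk.support_subset_of_restrict {a b : V} (p : (T.restrict S).Walk a b) (ha : a ∈ S) :
    ∀ z ∈ p.support, z ∈ S := by
  induction p with
  | nil => simpa
  | cons h _ ih => simpa [ha] using ih h.2.1

lemma mem_of_reachable_restrict (h : (T.restrict S).Reachable x y) (hx : x ∈ S) : y ∈ S :=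
  h.elim fun p ↦ Walk.support_subset_of_restrict p hx y p.end_mem_support

@[simp]
lemma mem_component : y ∈ T.component S x ↔ y ∈ S ∧ (T.restrict S).Reachable x y := by
  simp [component]

lemma component_subset : T.component S x ⊆ S := filter_subset _ _

lemma self_mem_component (hx : x ∈ S) : x ∈ T.component S x := by simp [hx]

lemma mem_component_of_adj (hy : y ∈ T.component S x) (hz : z ∈ S) (h : T.Adj y z) :
    z ∈ T.component S x := by
  rw [mem_component] at hy ⊢
  exact ⟨hz, hy.2.trans (Adj.reachable ⟨hy.1, hz, h⟩)⟩

lemma component_eq_of_mem (hy : y ∈ T.component S x) : T.component S y = T.component S x := by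
  rw [mem_component] at hy
  ext z
  simp only [mem_component]
  exact and_congr_right fun _ ↦ ⟨hy.2.trans, hy.2.symm.trans⟩

lemma reachable_restrict_component (hx : x ∈ S) (h : (T.restrict S).Reachable x y) :
    (T.restrict (T.component S x)).Reachable x y := by
  suffices ∀ a, (T.restrict S).Walk a y → a ∈ T.component S x →
      (T.restrict (T.component S x)).Reachable a y from
    h.elim fun p ↦ this x p (self_mem_component hx)
  intro a q
  clear h
  induction q with
  | nil => intro; rfl
  | cons hab _ ih =>
    intro ha
    have hb := mem_component_of_adj ha hab.2.1 hab.2.2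
    exact (Adj.reachable (G := T.restrict _) ⟨ha, hb, hab.2.2⟩).trans (ih hb)

lemma connectedOn_component (hx : x ∈ S) : T.ConnectedOn (T.component S x) := by
  intro a ha b hb
  rw [mem_component] at ha hb
  exact (reachable_restrict_component hx ha.2).symm.trans (reachable_restrict_component hx hb.2)

lemma exists_adj_of_reachable_restrict {B : Finset V} {b : V}
    (h : (T.restrict S).Reachable x b) (hb : b ∈ B) (hx : x ∈ S \ B) :
    ∃ y ∈ T.component (S \ B) x, ∃ b' ∈ B, T.Adj b' y := by
  obtain ⟨p⟩ := h
  induction p with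
  | nil => exact absurd hb (mem_sdiff.1 hx).2
  | @cons a a' _ h _ ih =>
    by_cases ha' : a' ∈ B
    · exact ⟨a, self_mem_component hx, a', ha', h.2.2.symm⟩
    · have ha'X : a' ∈ S \ B := mem_sdiff.2 ⟨h.2.1, ha'⟩
      rw [← component_eq_of_mem (mem_component_of_adj (self_mem_component hx) ha'X h.2.2)]
      exact ih hb ha'X

end

section

variable {S : Finset V}

lemma IsAcyclic.eq_of_adj_of_reachable_restrict (hT : T.IsAcyclic) {w y₁ y₂ : V} (hw : w ∉ S)
    (h₁ : T.Adj w y₁) (h₂ : T.Adj w y₂) (h : (T.restrict S).Reachable y₁ y₂) : y₁ = y₂ := by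
  by_contra hne
  obtain ⟨p, hp⟩ := h.exists_isPath
  have hy₁ : y₁ ∈ S := by
    cases p with
    | nil => exact absurd rfl hne
    | cons hadj _ => exact hadj.1
  have hsingle : (Walk.cons h₁.symm Walk.nil).IsPath := (Path.singleton h₁.symm).property
  have hwp := hT.mem_support_of_ne_mem_support_of_adj_of_isPath (hp.mapLe restrict_le)
    hsingle h₂.symm (by simp [Ne.symm hne, h₂.ne'])
  rw [Walk.support_mapLe_eq_support] at hwp
  exact hw (Walk.support_subset_of_restrict p hy₁ w hwp)

lemma IsAcyclic.not_reachable_restrict_of_adj (hT : T.IsAcyclic) {w w' y y' : V}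
    (hww' : T.Adj w w') (hw : w ∉ S) (hw' : w' ∉ S) (hy : y ∈ S) (h : T.Adj w y)
    (h' : T.Adj w' y') : ¬ (T.restrict S).Reachable y y' := by
  intro hr
  -- `w'` would have two neighbours, `w` and `y'`, joined inside `insert w S`.
  have hwy' : (T.restrict (insert w S)).Reachable w y' :=
    (Adj.reachable (G := T.restrict _) ⟨mem_insert_self w S, mem_insert_of_mem hy, h⟩).trans
      (hr.mono (restrict_mono (subset_insert w S)))
  have := hT.eq_of_adj_of_reachable_restrict (by simp [hw', hww'.ne']) hww'.symm h' hwy'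
  exact hw (this ▸ mem_of_reachable_restrict hr hy)

lemma IsTree.exists_mem_forall_adj_eq (hT : T.IsTree) (hS : S.Nonempty) :
    ∃ u ∈ S, ∀ y ∈ S, ∀ z ∈ S, T.Adj u y → T.Adj u z → y = z := by
  obtain ⟨x, hx⟩ := hS
  -- A neighbour of the vertex `u` of `S` farthest from `x` is one step closer to `x`, hence it
  -- is the penultimate vertex of the unique path from `x` to `u`.
  obtain ⟨u, hu, hmax⟩ := S.exists_max_image (T.dist x) ⟨x, hx⟩
  have key : ∀ y ∈ S, T.Adj u y → ∃ p : T.Walk x u, p.IsPath ∧ p.penultimate = y := by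
    intro y hy huy
    obtain ⟨q, hq⟩ := (hT.connected x y).exists_walk_length_eq_dist
    have hdist : T.dist x u = T.dist x y + 1 := by
      have := hmax y hy
      rcases hT.dist_eq_dist_add_one_of_adj x huy with h | h <;> omega
    refine ⟨q.concat huy.symm, (q.concat huy.symm).isPath_of_length_eq_dist ?_,
      Walk.penultimate_concat q huy.symm⟩
    rw [Walk.length_concat, hq, hdist]
  refine ⟨u, hu, fun y hy z hz huy huz ↦ ?_⟩
  obtain ⟨p, hp, rfl⟩ := key y hy huy
  obtain ⟨q, hq, rfl⟩ := key z hz huz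
  rw [Subtype.mk.inj ((hT.isAcyclic.subsingleton_path x u).elim ⟨p, hp⟩ ⟨q, hq⟩)]

end

section

variable {S s : Finset V} {u v x : V}

lemma isIndepSet_insert_of_forall_not_adj (hs : T.IsIndepSet (s : Set V))
    (hu : ∀ y ∈ s, ¬ T.Adj u y) : T.IsIndepSet (insert u s : Finset V) := by
  rw [coe_insert, isIndepSet_iff, Set.pairwise_insert]
  exact ⟨hs, fun y hy _ ↦ ⟨hu y hy, fun h ↦ hu y hy h.symm⟩⟩

lemma Colorable.exists_isIndepSet_two_mul_card_ge (hT : T.Colorable 2) (Y : Finset V) :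
    ∃ t ⊆ Y, T.IsIndepSet (t : Set V) ∧ #Y ≤ 2 * #t := by
  obtain ⟨c⟩ := hT
  have hclass (i : Fin 2) : T.IsIndepSet (({y ∈ Y | c y = i} : Finset V) : Set V) :=
    fun a ha b hb _ hab ↦ c.valid hab (by simp_all)
  have hsum : #Y = #{y ∈ Y | c y = 0} + #{y ∈ Y | c y = 1} := by
    rw [card_eq_sum_card_fiberwise (f := c) (t := univ) (fun _ _ ↦ mem_coe.2 (mem_univ _)),
      Fin.sum_univ_two]
  rcases le_total #{y ∈ Y | c y = 0} #{y ∈ Y | c y = 1} with h | h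
  · exact ⟨_, filter_subset _ _, hclass 1, by omega⟩
  · exact ⟨_, filter_subset _ _, hclass 0, by omega⟩

def IsPerfectMatchingOn (T : SimpleGraph V) (S : Finset V) (f : V → V) : Prop :=
  ∀ x ∈ S, f x ∈ S ∧ T.Adj x (f x) ∧ f (f x) = x

namespace IsPerfectMatchingOn

variable {f : V → V}

lemma of_subset {C : Finset V} (hf : T.IsPerfectMatchingOn S f) (hC : C ⊆ S)
    (hcl : ∀ x ∈ C, f x ∈ C) : T.IsPerfectMatchingOn C f :=
  fun x hx ↦ ⟨hcl x hx, (hf x (hC hx)).2⟩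

lemma sdiff_pair (hf : T.IsPerfectMatchingOn S f) (hu : u ∈ S) :
    T.IsPerfectMatchingOn (S \ {u, f u}) f := by
  refine hf.of_subset sdiff_subset fun x hx ↦ ?_
  obtain ⟨hxS, hxu⟩ := mem_sdiff.1 hx
  obtain ⟨hfx, -, hffx⟩ := hf x hxS
  refine mem_sdiff.2 ⟨hfx, fun h ↦ hxu ?_⟩
  rcases mem_insert.1 h with h | h
  · rw [← hffx, h]
    exact mem_insert_of_mem (mem_singleton_self _)
  · rw [← hffx, mem_singleton.1 h, (hf u hu).2.2]
    exact mem_insert_self _ _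

lemma component (hf : T.IsPerfectMatchingOn S f) : T.IsPerfectMatchingOn (T.component S x) f :=
  hf.of_subset component_subset fun _ hy ↦
    mem_component_of_adj hy (hf _ (component_subset hy)).1 (hf _ (component_subset hy)).2.1

lemma biUnion {ι : Type*} {D : Finset ι} {C : ι → Finset V}
    (hC : ∀ i ∈ D, T.IsPerfectMatchingOn (C i) f) : T.IsPerfectMatchingOn (D.biUnion C) f := by
  intro x hx
  obtain ⟨i, hi, hxi⟩ := mem_biUnion.1 hx
  exact ⟨mem_biUnion.2 ⟨i, hi, (hC i hi x hxi).1⟩, (hC i hi x hxi).2⟩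

lemma even_card (hf : T.IsPerfectMatchingOn S f) : Even #S := by
  -- The fibres of `x ↦ s(x, f x)` are the matched pairs.
  have hfiber : ∀ e ∈ S.image (fun x ↦ s(x, f x)), #{x ∈ S | s(x, f x) = e} = 2 := by
    simp only [mem_image]
    rintro _ ⟨z, hz, rfl⟩
    obtain ⟨hfz, hadj, hffz⟩ := hf z hz
    have : {x ∈ S | s(x, f x) = s(z, f z)} = {z, f z} := by
      ext x
      simp only [mem_filter, Sym2.eq_iff, mem_insert, mem_singleton]
      constructor
      · rintro ⟨-, ⟨rfl, -⟩ | ⟨rfl, -⟩⟩ <;> simp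
      · rintro (rfl | rfl)
        · exact ⟨hz, Or.inl ⟨rfl, rfl⟩⟩
        · exact ⟨hfz, Or.inr ⟨rfl, hffz⟩⟩
    rw [this, card_pair hadj.ne]
  rw [card_eq_sum_card_image (fun x ↦ s(x, f x)) S, sum_congr rfl hfiber, sum_const, smul_eq_mul]
  exact even_two.mul_left _

lemma card_union_image (hf : T.IsPerfectMatchingOn S f) (hs : s ⊆ S)
    (hi : T.IsIndepSet (s : Set V)) : s ∪ s.image f ⊆ S ∧ #(s ∪ s.image f) = 2 * #s := by
  have hinj : Set.InjOn f s := fun a ha b hb hab ↦ by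
    rw [← (hf a (hs ha)).2.2, ← (hf b (hs hb)).2.2, hab]
  have hdisj : Disjoint s (s.image f) := by
    rw [Finset.disjoint_left]
    rintro _ hz hz'
    obtain ⟨w, hw, rfl⟩ := mem_image.1 hz'
    exact hi hw hz (hf w (hs hw)).2.1.ne (hf w (hs hw)).2.1
  refine ⟨union_subset hs fun z hz ↦ ?_, ?_⟩
  · obtain ⟨w, hw, rfl⟩ := mem_image.1 hz
    exact (hf w (hs hw)).1
  · rw [card_union_of_disjoint hdisj, card_image_of_injOn hinj, two_mul]

lemma two_mul_card_le (hf : T.IsPerfectMatchingOn S f) (hs : s ⊆ S)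
    (hi : T.IsIndepSet (s : Set V)) : 2 * #s ≤ #S := by
  obtain ⟨hsub, hcard⟩ := hf.card_union_image hs hi
  exact hcard ▸ card_le_card hsub

lemma mem_or_apply_mem (hf : T.IsPerfectMatchingOn S f) (hs : s ⊆ S)
    (hi : T.IsIndepSet (s : Set V)) (hc : 2 * #s = #S) (hx : x ∈ S) : x ∈ s ∨ f x ∈ s := by
  obtain ⟨hsub, hcard⟩ := hf.card_union_image hs hi
  rw [← eq_of_subset_of_card_le hsub (by omega), mem_union, mem_image] at hx
  rcases hx with hx | ⟨w, hw, rfl⟩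
  · exact Or.inl hx
  · exact Or.inr ((hf w (hs hw)).2.2.symm ▸ hw)

end IsPerfectMatchingOn

lemma exists_isPerfectMatchingOn_of_sdiff_pair {f : V → V}
    (hf : T.IsPerfectMatchingOn (S \ {u, v}) f) (hu : u ∈ S) (hv : v ∈ S) (huv : T.Adj u v) :
    ∃ g, T.IsPerfectMatchingOn S g := by
  refine ⟨fun x ↦ if x = u then v else if x = v then u else f x, fun x hx ↦ ?_⟩
  by_cases hxu : x = u
  · subst hxu; simp [hv, huv, huv.ne']
  by_cases hxv : x = v
  · subst hxv; simp [hu, huv.symm, huv.ne']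
  obtain ⟨hfx, hadj, hffx⟩ := hf x (by simp [hx, hxu, hxv])
  obtain ⟨hfxS, hfx'⟩ := mem_sdiff.1 hfx
  simp only [mem_insert, mem_singleton, not_or] at hfx'
  simp [hxu, hxv, hfx'.1, hfx'.2, hfxS, hadj, hffx]

theorem IsTree.exists_isPerfectMatchingOn (hT : T.IsTree) (S : Finset V)
    (hS : ∀ s ⊆ S, T.IsIndepSet (s : Set V) → 2 * #s ≤ #S) : ∃ f, T.IsPerfectMatchingOn S f := by
  induction S using Finset.strongInduction with
  | H S IH =>
  rcases S.eq_empty_or_nonempty with rfl | hne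
  · exact ⟨id, by simp [IsPerfectMatchingOn]⟩
  obtain ⟨u, hu, hleaf⟩ := hT.exists_mem_forall_adj_eq hne
  by_cases hv : ∃ v ∈ S, T.Adj u v
  · obtain ⟨v, hv, huv⟩ := hv
    have hpair : {u, v} ⊆ S := by simp [insert_subset_iff, hu, hv]
    obtain ⟨f, hf⟩ := IH _ (sdiff_ssubset hpair (by simp)) fun s hs hi ↦ by
      have hus : u ∉ s := fun h ↦ by simpa using (mem_sdiff.1 (hs h)).2
      have := hS (insert u s) (insert_subset hu (hs.trans sdiff_subset))
        (isIndepSet_insert_of_forall_not_adj hi fun y hy huy ↦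
          (mem_sdiff.1 (hs hy)).2 (by simp [hleaf y (mem_sdiff.1 (hs hy)).1 v hv huy huv]))
      rw [card_insert_of_notMem hus] at this
      rw [card_sdiff_of_subset hpair, card_pair huv.ne]
      omega
    exact exists_isPerfectMatchingOn_of_sdiff_pair hf hu hv huv
  · push Not at hv
    obtain ⟨t, hts, hti, htc⟩ := hT.colorable_two.exists_isIndepSet_two_mul_card_ge (S.erase u)
    have hut : u ∉ t := fun h ↦ by simpa using hts h
    have := hS (insert u t) (insert_subset hu (hts.trans (erase_subset u S)))
      (isIndepSet_insert_of_forall_not_adj hti fun y hy ↦ hv y (mem_of_mem_erase (hts hy)))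
    rw [card_insert_of_notMem hut] at this
    rw [card_erase_of_mem hu] at htc
    omega

end

section

variable {S W W' A B s : Finset V} {f : V → V}

/-- When `T[S]` has a perfect matching, these are the maximum independent sets of `T[S]` that
avoid `W`. -/
noncomputable def halfIndepSets (T : SimpleGraph V) (S W : Finset V) : Finset (Finset V) :=
  {s ∈ S.powerset | T.IsIndepSet (s : Set V) ∧ 2 * #s = #S ∧ Disjoint s W}

@[simp]
lemma mem_halfIndepSets :
    s ∈ T.halfIndepSets S W ↔ s ⊆ S ∧ T.IsIndepSet (s : Set V) ∧ 2 * #s = #S ∧ Disjoint s W := by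
  simp [halfIndepSets]

lemma card_halfIndepSets_empty_le_one : #(T.halfIndepSets ∅ W) ≤ 1 :=
  card_le_one.2 fun a ha b hb ↦ by
    rw [mem_halfIndepSets, subset_empty] at ha hb
    rw [ha.1, hb.1]

lemma card_halfIndepSets_anti (h : W ⊆ W') :
    #(T.halfIndepSets S W') ≤ #(T.halfIndepSets S W) :=
  card_le_card fun s hs ↦ by
    rw [mem_halfIndepSets] at hs ⊢
    exact ⟨hs.1, hs.2.1, hs.2.2.1, hs.2.2.2.mono_right h⟩

lemma card_halfIndepSets_union_le (hAB : Disjoint A B)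
    (hA : ∀ s ⊆ A, T.IsIndepSet (s : Set V) → 2 * #s ≤ #A)
    (hB : ∀ s ⊆ B, T.IsIndepSet (s : Set V) → 2 * #s ≤ #B) :
    #(T.halfIndepSets (A ∪ B) W) ≤ #(T.halfIndepSets A W) * #(T.halfIndepSets B W) := by
  rw [← card_product]
  refine card_le_card_of_injOn (fun s ↦ (s ∩ A, s ∩ B)) (fun s hs ↦ ?_) (fun s₁ h₁ s₂ h₂ h ↦ ?_)
  · -- Each trace of `s` is at most half of its side, and together they are half of `A ∪ B`.
    obtain ⟨hsub, hi, hcard, hW⟩ := mem_halfIndepSets.1 hs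
    have hsplit : #(s ∩ A) + #(s ∩ B) = #s := by
      rw [← card_union_of_disjoint (hAB.mono inter_subset_right inter_subset_right),
        ← inter_union_distrib_left, inter_eq_left.2 hsub]
    have hiA := hA _ inter_subset_right (hi.mono inter_subset_left)
    have hiB := hB _ inter_subset_right (hi.mono inter_subset_left)
    rw [card_union_of_disjoint hAB] at hcard
    simp only [coe_product, Set.mem_prod, mem_coe, mem_halfIndepSets]
    exact ⟨⟨inter_subset_right, hi.mono inter_subset_left, by omega,
        hW.mono_left inter_subset_left⟩,
      ⟨inter_subset_right, hi.mono inter_subset_left, by omega, hW.mono_left inter_subset_left⟩⟩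
  · simp only [mem_coe, mem_halfIndepSets, Prod.mk.injEq] at h₁ h₂ h
    rw [← inter_eq_left.2 h₁.1, ← inter_eq_left.2 h₂.1, inter_union_distrib_left,
      inter_union_distrib_left, h.1, h.2]

lemma card_halfIndepSets_biUnion_le {ι : Type*} {D : Finset ι} {C : ι → Finset V}
    (hD : (D : Set ι).PairwiseDisjoint C) (hC : ∀ i ∈ D, T.IsPerfectMatchingOn (C i) f) :
    #(T.halfIndepSets (D.biUnion C) W) ≤ ∏ i ∈ D, #(T.halfIndepSets (C i) W) := by
  induction D using Finset.induction_on with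
  | empty => simpa using card_halfIndepSets_empty_le_one
  | insert i D hi ih =>
    rw [coe_insert, Set.pairwiseDisjoint_insert_of_notMem (mem_coe.not.2 hi)] at hD
    have hC' : ∀ j ∈ D, T.IsPerfectMatchingOn (C j) f := fun j hj ↦ hC j (mem_insert_of_mem hj)
    rw [biUnion_insert, prod_insert hi]
    refine (card_halfIndepSets_union_le ?_ (fun _ ↦ (hC i (mem_insert_self i D)).two_mul_card_le)
      (fun _ ↦ (IsPerfectMatchingOn.biUnion hC').two_mul_card_le)).trans
      (Nat.mul_le_mul_left _ (ih hD.1 hC'))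
    exact (disjoint_biUnion_right _ _ _).2 fun j hj ↦ hD.2 j (mem_coe.2 hj)

lemma card_filter_mem_halfIndepSets_le {q q' : V} (hq : q ∈ S) (hq' : q' ∈ S)
    (hqq' : T.Adj q q') :
    #{s ∈ T.halfIndepSets S W | q ∈ s} ≤
      #(T.halfIndepSets (S \ {q, q'}) {y ∈ S \ {q, q'} | T.Adj q y}) := by
  refine card_le_card_of_injOn (fun s ↦ s.erase q) (fun s hs ↦ ?_) (fun s₁ h₁ s₂ h₂ h ↦ ?_)
  · simp only [coe_filter, Set.mem_ofPred_eq, mem_halfIndepSets] at hs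
    obtain ⟨⟨hsub, hi, hcard, -⟩, hqs⟩ := hs
    have hq's : q' ∉ s := fun h ↦ hi hqs h hqq'.ne hqq'
    simp only [mem_coe, mem_halfIndepSets]
    refine ⟨fun y hy ↦ ?_, hi.mono (coe_subset.2 (erase_subset q s)), ?_, ?_⟩
    · obtain ⟨hyq, hys⟩ := mem_erase.1 hy
      have hyq' : y ≠ q' := fun h ↦ hq's (h ▸ hys)
      simp [hsub hys, hyq, hyq']
    · have := card_pos.2 ⟨q, hqs⟩
      rw [card_erase_of_mem hqs, card_sdiff_of_subset (by simp [insert_subset_iff, hq, hq']),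
        card_pair hqq'.ne]
      omega
    · refine Finset.disjoint_left.2 fun y hy hy' ↦ ?_
      exact hi hqs (mem_erase.1 hy).2 (mem_erase.1 hy).1.symm (mem_filter.1 hy').2
  · simp only [coe_filter, Set.mem_ofPred_eq] at h₁ h₂
    rw [← insert_erase h₁.2, ← insert_erase h₂.2]
    exact congrArg (insert q) h

lemma IsPerfectMatchingOn.card_halfIndepSets_le_add {u : V} (hf : T.IsPerfectMatchingOn S f)
    (hu : u ∈ S) :
    #(T.halfIndepSets S W) ≤
      #{s ∈ T.halfIndepSets S W | u ∈ s} + #{s ∈ T.halfIndepSets S W | f u ∈ s} := by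
  refine (card_le_card fun s hs ↦ ?_).trans (card_union_le _ _)
  obtain ⟨hsub, hi, hc, -⟩ := mem_halfIndepSets.1 hs
  rw [← filter_or, mem_filter]
  exact ⟨hs, hf.mem_or_apply_mem hsub hi hc hu⟩

end

section

variable {S X : Finset V} {f : V → V} {u v w w' : V}

lemma card_filter_adj_lt (hXS : X ⊆ S) (hu : u ∈ S) (huX : u ∉ X) (h : T.Adj v u) :
    #{y ∈ X | T.Adj v y} < #{y ∈ S | T.Adj v y} :=
  card_lt_card <| (ssubset_iff_of_subset (filter_subset_filter _ hXS)).2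
    ⟨u, mem_filter.2 ⟨hu, h⟩, fun h' ↦ huX (mem_filter.1 h').1⟩

lemma card_filter_adj_le_ncard [Finite V] (v : V) (S : Finset V) :
    #{y ∈ S | T.Adj v y} ≤ (T.neighborSet v).ncard := by
  rw [← Set.ncard_coe_finset]
  exact Set.ncard_le_ncard fun y hy ↦ (mem_filter.1 hy).2

lemma ConnectedOn.biUnion_component_sdiff_pair (hS : T.ConnectedOn S) (hw : w ∈ S) :
    {y ∈ S \ {w, w'} | T.Adj w y ∨ T.Adj w' y}.biUnion (T.component (S \ {w, w'})) =
      S \ {w, w'} := by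
  refine Subset.antisymm (biUnion_subset.2 fun _ _ ↦ component_subset) fun x hx ↦ ?_
  obtain ⟨y, hy, b, hb, hby⟩ := exists_adj_of_reachable_restrict
    (hS x (mem_sdiff.1 hx).1 w hw) (mem_insert_self w {w'}) hx
  refine mem_biUnion.2 ⟨y, mem_filter.2 ⟨component_subset hy, ?_⟩, ?_⟩
  · rcases mem_insert.1 hb with rfl | hb
    · exact Or.inl hby
    · exact Or.inr (mem_singleton.1 hb ▸ hby)
  · exact component_eq_of_mem hy ▸ self_mem_component hx

lemma IsAcyclic.pairwiseDisjoint_component_sdiff_pair (hT : T.IsAcyclic) (hww' : T.Adj w w') :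
    (({y ∈ S \ {w, w'} | T.Adj w y ∨ T.Adj w' y} : Finset V) : Set V).PairwiseDisjoint
      (T.component (S \ {w, w'})) := by
  intro y hy z hz hyz
  simp only [coe_filter, Set.mem_ofPred_eq] at hy hz
  refine Finset.disjoint_left.2 fun x hxy hxz ↦ hyz ?_
  have hr : (T.restrict (S \ {w, w'})).Reachable y z := (mem_component.1 <|
    (component_eq_of_mem hxy).symm.trans (component_eq_of_mem hxz) ▸ self_mem_component hz.1).2
  have hw : w ∉ S \ {w, w'} := by simp
  have hw' : w' ∉ S \ {w, w'} := by simp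
  rcases hy.2 with hy' | hy' <;> rcases hz.2 with hz' | hz'
  · exact hT.eq_of_adj_of_reachable_restrict hw hy' hz' hr
  · exact (hT.not_reachable_restrict_of_adj hww' hw hw' hy.1 hy' hz' hr).elim
  · exact (hT.not_reachable_restrict_of_adj hww' hw hw' hz.1 hz' hy' hr.symm).elim
  · exact hT.eq_of_adj_of_reachable_restrict hw' hy' hz' hr

end

section

open Nat (fib fib_mono prod_fib_add_one_le prod_fib_add_two_add_prod_fib_add_one)

variable {S : Finset V} {f : V → V} {w : V}

/-- The second bound is what a component left after deleting a matched pair contributes: its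
attachment vertex is adjacent to the pair, so it has degree at most 2 in the component. -/
def FibBounded (T : SimpleGraph V) (S : Finset V) : Prop :=
  #(T.halfIndepSets S ∅) ≤ fib (#S / 2 + 2) ∧
    ∀ w ∈ S, #{y ∈ S | T.Adj w y} ≤ 2 → #(T.halfIndepSets S {w}) ≤ fib (#S / 2 + 1)

namespace IsPerfectMatchingOn

lemma sum_card_component_div_two (hT : T.IsAcyclic) (hS : T.ConnectedOn S)
    (hf : T.IsPerfectMatchingOn S f) (hw : w ∈ S) :
    ∑ y ∈ {y ∈ S \ {w, f w} | T.Adj w y ∨ T.Adj (f w) y}, #(T.component (S \ {w, f w}) y) / 2 + 1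
      = #S / 2 := by
  have hX := card_biUnion (hT.pairwiseDisjoint_component_sdiff_pair (S := S) (hf w hw).2.1)
  rw [hS.biUnion_component_sdiff_pair hw, card_sdiff_of_subset (by simp [insert_subset_iff, hw,
    (hf w hw).1]), card_pair (hf w hw).2.1.ne] at hX
  have heven : ∀ y, Even #(T.component (S \ {w, f w}) y) := fun _ ↦
    (hf.sdiff_pair hw).component.even_card
  rw [sum_congr rfl fun y _ ↦ (Nat.div_two_mul_two_of_even (heven y)).symm, ← sum_mul] at hX
  obtain ⟨r, hr⟩ := hf.even_card
  have := card_pos.2 ⟨w, hw⟩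
  omega

lemma card_halfIndepSets_sdiff_pair_le_prod [Finite V] (hT : T.IsAcyclic)
    (hdeg : ∀ v, (T.neighborSet v).ncard ≤ 3) (hS : T.ConnectedOn S)
    (hf : T.IsPerfectMatchingOn S f) (hw : w ∈ S)
    (IH : ∀ C ⊂ S, T.ConnectedOn C → T.IsPerfectMatchingOn C f → T.FibBounded C)
    (E : Finset V) :
    #(T.halfIndepSets (S \ {w, f w}) E) ≤
      ∏ y ∈ {y ∈ S \ {w, f w} | T.Adj w y ∨ T.Adj (f w) y},
        fib (#(T.component (S \ {w, f w}) y) / 2 + if y ∈ E then 1 else 2) := by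
  have hXS : S \ {w, f w} ⊂ S :=
    sdiff_ssubset (by simp [insert_subset_iff, hw, (hf w hw).1]) (by simp)
  have hfX := hf.sdiff_pair hw
  conv_lhs => rw [← hS.biUnion_component_sdiff_pair hw]
  refine (card_halfIndepSets_biUnion_le (hT.pairwiseDisjoint_component_sdiff_pair (hf w hw).2.1)
    fun y _ ↦ hfX.component).trans (prod_le_prod' fun y hy ↦ ?_)
  obtain ⟨hyX, hadj⟩ := mem_filter.1 hy
  set X := S \ {w, f w}
  set C := T.component X y
  have hCS : C ⊂ S := (component_subset.trans_ssubset hXS)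
  obtain ⟨hempty, hroot⟩ := IH C hCS (connectedOn_component hyX) hfX.component
  have hdegy : #{z ∈ C | T.Adj y z} ≤ 2 := by
    have key : ∀ b ∈ ({w, f w} : Finset V), T.Adj b y → #{z ∈ C | T.Adj y z} ≤ 2 := by
      intro b hb hby
      have hbS : b ∈ S := by
        rcases mem_insert.1 hb with rfl | hb
        · exact hw
        · exact mem_singleton.1 hb ▸ (hf w hw).1
      have := card_filter_adj_lt hCS.1 hbS (fun h ↦ (mem_sdiff.1 (component_subset h)).2 hb)
        hby.symm
      have := (card_filter_adj_le_ncard y S).trans (hdeg y)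
      omega
    rcases hadj with h | h
    · exact key w (mem_insert_self _ _) h
    · exact key (f w) (mem_insert_of_mem (mem_singleton_self _)) h
  split_ifs with hyE
  · exact (card_halfIndepSets_anti (singleton_subset_iff.2 hyE)).trans
      (hroot y (self_mem_component hyX) hdegy)
  · exact (card_halfIndepSets_anti (empty_subset E)).trans hempty

lemma card_halfIndepSets_empty_le_fib [Finite V] (hT : T.IsTree)
    (hdeg : ∀ v, (T.neighborSet v).ncard ≤ 3) (hS : T.ConnectedOn S)
    (hf : T.IsPerfectMatchingOn S f)
    (IH : ∀ C ⊂ S, T.ConnectedOn C → T.IsPerfectMatchingOn C f → T.FibBounded C) :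
    #(T.halfIndepSets S ∅) ≤ fib (#S / 2 + 2) := by
  rcases S.eq_empty_or_nonempty with rfl | hne
  · simpa using card_halfIndepSets_empty_le_one
  obtain ⟨u, hu, hleaf⟩ := hT.exists_mem_forall_adj_eq hne
  obtain ⟨hv, huv, -⟩ := hf u hu
  set X := S \ {u, f u}
  set D := {y ∈ X | T.Adj u y ∨ T.Adj (f u) y}
  have hnotu : ∀ y ∈ X, ¬ T.Adj u y := fun y hy h ↦
    (mem_sdiff.1 hy).2 (by simp [hleaf y (mem_sdiff.1 hy).1 (f u) hv h huv])
  have hDv : D ⊆ {y ∈ X | T.Adj (f u) y} := fun y hy ↦ by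
    obtain ⟨hyX, h⟩ := mem_filter.1 hy
    exact mem_filter.2 ⟨hyX, h.resolve_left (hnotu y hyX)⟩
  have hD : #D ≤ 2 := by
    have := card_filter_adj_lt (X := X) sdiff_subset hu (by simp [X]) huv.symm
    have := (card_filter_adj_le_ncard (f u) S).trans (hdeg (f u))
    have := card_le_card hDv
    omega
  have hu_term : #{s ∈ T.halfIndepSets S ∅ | u ∈ s} ≤
      ∏ y ∈ D, fib (#(T.component X y) / 2 + 2) := by
    refine (card_filter_mem_halfIndepSets_le hu hv huv).trans
      ((hf.card_halfIndepSets_sdiff_pair_le_prod hT.isAcyclic hdeg hS hu IH _).trans_eq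
        (prod_congr rfl fun y hy ↦ ?_))
    rw [if_neg fun h ↦ hnotu y (mem_filter.1 hy).1 (mem_filter.1 h).2]
  have hv_term : #{s ∈ T.halfIndepSets S ∅ | f u ∈ s} ≤
      ∏ y ∈ D, fib (#(T.component X y) / 2 + 1) := by
    have h := card_filter_mem_halfIndepSets_le (W := ∅) hv hu huv.symm
    rw [pair_comm] at h
    refine h.trans ((hf.card_halfIndepSets_sdiff_pair_le_prod hT.isAcyclic hdeg hS hu IH _).trans_eq
        (prod_congr rfl fun y hy ↦ ?_))
    rw [if_pos (hDv hy)]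
  calc #(T.halfIndepSets S ∅)
      ≤ #{s ∈ T.halfIndepSets S ∅ | u ∈ s} + #{s ∈ T.halfIndepSets S ∅ | f u ∈ s} :=
        hf.card_halfIndepSets_le_add hu
    _ ≤ ∏ y ∈ D, fib (#(T.component X y) / 2 + 2) + ∏ y ∈ D, fib (#(T.component X y) / 2 + 1) :=
        add_le_add hu_term hv_term
    _ = fib (#S / 2 + 2) := by
        rw [prod_fib_add_two_add_prod_fib_add_one hD,
          ← hf.sum_card_component_div_two hT.isAcyclic hS hu]

lemma card_halfIndepSets_singleton_le_fib [Finite V] (hT : T.IsAcyclic)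
    (hdeg : ∀ v, (T.neighborSet v).ncard ≤ 3) (hS : T.ConnectedOn S)
    (hf : T.IsPerfectMatchingOn S f)
    (IH : ∀ C ⊂ S, T.ConnectedOn C → T.IsPerfectMatchingOn C f → T.FibBounded C)
    (hw : w ∈ S) (hdw : #{y ∈ S | T.Adj w y} ≤ 2) :
    #(T.halfIndepSets S {w}) ≤ fib (#S / 2 + 1) := by
  obtain ⟨hw', hww', -⟩ := hf w hw
  have hsum := hf.sum_card_component_div_two hT hS hw
  set X := S \ {w, f w}
  set D := {y ∈ X | T.Adj w y ∨ T.Adj (f w) y}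
  set E := {y ∈ X | T.Adj (f w) y}
  have hw_term : #{s ∈ T.halfIndepSets S {w} | w ∈ s} = 0 :=
    card_eq_zero.2 <| filter_eq_empty_iff.2 fun s hs ↦
      disjoint_singleton_right.1 (mem_halfIndepSets.1 hs).2.2.2
  have hfw_term : #{s ∈ T.halfIndepSets S {w} | f w ∈ s} ≤ #(T.halfIndepSets X E) := by
    have h := card_filter_mem_halfIndepSets_le (W := {w}) hw' hw hww'.symm
    rwa [pair_comm] at h
  have hmissing : #{y ∈ D | y ∉ E} ≤ 1 := by
    have hsub : {y ∈ D | y ∉ E} ⊆ {y ∈ X | T.Adj w y} := fun y hy ↦ by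
      simp only [D, E, mem_filter] at hy
      exact mem_filter.2 ⟨hy.1.1, hy.1.2.resolve_right fun h ↦ hy.2 ⟨hy.1.1, h⟩⟩
    have := card_filter_adj_lt (X := X) sdiff_subset hw' (by simp [X]) hww'
    have := card_le_card hsub
    omega
  calc #(T.halfIndepSets S {w})
      ≤ #{s ∈ T.halfIndepSets S {w} | w ∈ s} + #{s ∈ T.halfIndepSets S {w} | f w ∈ s} :=
        hf.card_halfIndepSets_le_add hw
    _ ≤ ∏ y ∈ D, fib (#(T.component X y) / 2 + if y ∈ E then 1 else 2) := by
        rw [hw_term, zero_add]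
        exact hfw_term.trans (hf.card_halfIndepSets_sdiff_pair_le_prod hT hdeg hS hw IH E)
    _ = ∏ y ∈ D, fib ((#(T.component X y) / 2 + if y ∉ E then 1 else 0) + 1) :=
        prod_congr rfl fun y _ ↦ by split_ifs <;> rfl
    _ ≤ fib (∑ y ∈ D, (#(T.component X y) / 2 + if y ∉ E then 1 else 0) + 1) :=
        prod_fib_add_one_le _ _
    _ ≤ fib (#S / 2 + 1) := by
        refine fib_mono ?_
        rw [sum_add_distrib, sum_boole, Nat.cast_id]
        omega

lemma fibBounded [Finite V] (hT : T.IsTree) (hdeg : ∀ v, (T.neighborSet v).ncard ≤ 3)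
    (hS : T.ConnectedOn S) (hf : T.IsPerfectMatchingOn S f) : T.FibBounded S := by
  induction S using Finset.strongInduction with
  | H S IH =>
  exact ⟨hf.card_halfIndepSets_empty_le_fib hT hdeg hS IH, fun w hw hdw ↦
    hf.card_halfIndepSets_singleton_le_fib hT.isAcyclic hdeg hS IH hw hdw⟩

end IsPerfectMatchingOn

end

end SimpleGraph

section MaximumIndependentSets

open SimpleGraph

variable {V : Type*} [Fintype V] {T : SimpleGraph V}

lemma two_mul_card_le_of_two_mul_indepNum (h : 2 * _root_.indepNum T = Fintype.card V)
    (s : Finset V) (hs : T.IsIndepSet (s : Set V)) : 2 * #s ≤ #(univ : Finset V) := by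
  have : #s ≤ _root_.indepNum T :=
    le_csSup ⟨Fintype.card V, by rintro _ ⟨t, -, rfl⟩; exact card_le_univ t⟩ ⟨s, hs, rfl⟩
  rw [card_univ]
  omega

lemma numMaxIndep_eq_card_halfIndepSets (h : 2 * _root_.indepNum T = Fintype.card V) :
    numMaxIndep T = #(T.halfIndepSets univ ∅) := by
  rw [numMaxIndep, ← Set.ncard_coe_finset]
  congr 1
  ext s
  simp only [Set.mem_ofPred_eq, mem_coe, mem_halfIndepSets, subset_univ, true_and,
    disjoint_empty_right, and_true, card_univ, ← h]
  exact and_congr Iff.rfl (by omega)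

end MaximumIndependentSets

theorem stmt9 {V : Type*} [Fintype V] (T : SimpleGraph V) (hT : T.IsTree)
    (hsub : ∀ v : V, (T.neighborSet v).ncard ≤ 3) (n α : ℕ)
    (hn : Fintype.card V = n) (hα : _root_.indepNum T = α) (h : 2 * α = n) :
    numMaxIndep T ≤ Nat.fib (α + 2) := by
  have hcard : 2 * _root_.indepNum T = Fintype.card V := by rw [hα, hn, h]
  obtain ⟨f, hf⟩ := hT.exists_isPerfectMatchingOn univ
    fun s _ ↦ two_mul_card_le_of_two_mul_indepNum hcard s
  have hconn : T.ConnectedOn univ := by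
    intro a _ b _
    rw [restrict_univ]
    exact hT.connected a b
  have hbound := (hf.fibBounded hT hsub hconn).1
  rwa [card_univ, hn, ← h, Nat.mul_div_cancel_left _ two_pos,
    ← numMaxIndep_eq_card_halfIndepSets hcard] at hbound
end

section
/- For every positive integer k, the number of maximum independent sets of the tree T(k), obtained by attaching a new endvertex to every vertex of a path of order k, equals the Fibonacci number f(k+2). -/
open SimpleGraph

/-- The caterpillar `T(k)`: a path on the vertices `inl 0, …, inl (k-1)`, with a pendant
vertex `inr i` attached to each path vertex `inl i`. -/
def caterpillar (k : ℕ) : SimpleGraph (Fin k ⊕ Fin k) :=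
  SimpleGraph.fromRel (fun u v =>
    (∃ i j : Fin k, u = Sum.inl i ∧ v = Sum.inl j ∧ (i : ℕ) + 1 = (j : ℕ)) ∨
    (∃ i : Fin k, u = Sum.inl i ∧ v = Sum.inr i))

/-! Each pendant edge `{inl i, inr i}` of `T(k)` contains at most one vertex of an independent
set, so `α(T(k)) = k`, and a maximum independent set picks exactly one vertex from each
pendant edge. It is therefore determined by its trace on the path, which may be any independent
set of the path: a word `f : Fin k → Bool` with no two consecutive `true`s. Splitting such words
on their first letter gives the Fibonacci recursion. -/

def NoTwoConsecutive {n : ℕ} (f : Fin n → Bool) : Prop :=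
  ∀ i j : Fin n, (i : ℕ) + 1 = j → ¬(f i ∧ f j)

instance {n : ℕ} : DecidablePred (@NoTwoConsecutive n) := fun _ => by
  unfold NoTwoConsecutive; infer_instance

lemma Fintype.card_subtype_fin_cons {α : Type*} [Fintype α] {m : ℕ}
    (p : (Fin (m + 1) → α) → Prop) [DecidablePred p] :
    Fintype.card {f // p f} = ∑ a, Fintype.card {g : Fin m → α // p (Fin.cons a g)} := by
  simp only [Fintype.card_subtype, Finset.card_filter]
  rw [← (Fin.consEquiv fun _ => α).sum_comp, Fintype.sum_prod_type]
  rfl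

lemma noTwoConsecutive_cons {n : ℕ} (b : Bool) (g : Fin n → Bool) :
    NoTwoConsecutive (Fin.cons b g : Fin (n + 1) → Bool) ↔
      (∀ j : Fin n, (j : ℕ) = 0 → ¬(b ∧ g j)) ∧ NoTwoConsecutive g := by
  constructor
  · intro h
    refine ⟨fun j hj => ?_, fun i j hij => ?_⟩
    · simpa using h 0 j.succ (by simp [hj])
    · simpa using h i.succ j.succ (by simp [hij])
  · rintro ⟨h0, h⟩ i j hij
    induction i using Fin.cases with
    | zero => induction j using Fin.cases with
      | zero => simp at hij
      | succ j => simpa using h0 j (by simpa using hij.symm)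
    | succ i => induction j using Fin.cases with
      | zero => simp at hij
      | succ j => simpa using h i j (by simpa using hij)

@[simp]
lemma noTwoConsecutive_cons_false {n : ℕ} (g : Fin n → Bool) :
    NoTwoConsecutive (Fin.cons false g : Fin (n + 1) → Bool) ↔ NoTwoConsecutive g := by
  simp [noTwoConsecutive_cons]

@[simp]
lemma noTwoConsecutive_cons_true {n : ℕ} (g : Fin (n + 1) → Bool) :
    NoTwoConsecutive (Fin.cons true g : Fin (n + 2) → Bool) ↔
      g 0 = false ∧ NoTwoConsecutive g := by
  simp [noTwoConsecutive_cons]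

lemma card_noTwoConsecutive (n : ℕ) :
    Fintype.card {f : Fin n → Bool // NoTwoConsecutive f} = Nat.fib (n + 2) := by
  induction n using Nat.twoStepInduction with
  | zero => rfl
  | one => decide
  | more n ih₀ ih₁ =>
    rw [Fintype.card_subtype_fin_cons, Fintype.sum_bool]
    simp only [noTwoConsecutive_cons_true, noTwoConsecutive_cons_false]
    rw [Fintype.card_subtype_fin_cons, Fintype.sum_bool]
    simp [ih₀, ih₁, Nat.fib_add_two]

namespace caterpillar

variable {k : ℕ}

@[simp]
lemma adj_inl_inl {i j : Fin k} :
    (caterpillar k).Adj (.inl i) (.inl j) ↔ (i : ℕ) + 1 = j ∨ (j : ℕ) + 1 = i := by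
  simp only [caterpillar, fromRel_adj]
  constructor
  · rintro ⟨-, h⟩
    simpa using h
  · intro h
    refine ⟨fun hij => ?_, by simpa using h⟩
    cases hij
    omega

@[simp]
lemma adj_inl_inr {i j : Fin k} : (caterpillar k).Adj (.inl i) (.inr j) ↔ i = j := by
  simp [caterpillar, eq_comm]

@[simp]
lemma adj_inr_inl {i j : Fin k} : (caterpillar k).Adj (.inr i) (.inl j) ↔ i = j := by
  simp [caterpillar]

@[simp]
lemma not_adj_inr_inr {i j : Fin k} : ¬(caterpillar k).Adj (.inr i) (.inr j) := by
  simp [caterpillar]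

def ofPath (f : Fin k → Bool) : Finset (Fin k ⊕ Fin k) :=
  (Finset.univ.filter (f · = true)).disjSum (Finset.univ.filter (f · = false))

@[simp]
lemma inl_mem_ofPath {f : Fin k → Bool} {i : Fin k} : .inl i ∈ ofPath f ↔ f i = true := by
  simp [ofPath]

@[simp]
lemma inr_mem_ofPath {f : Fin k → Bool} {i : Fin k} : .inr i ∈ ofPath f ↔ f i = false := by
  simp [ofPath]

lemma card_ofPath (f : Fin k → Bool) : (ofPath f).card = k := by
  rw [ofPath, Finset.card_disjSum]
  simpa using Finset.card_filter_add_card_filter_not (s := Finset.univ) (f · = true)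

lemma ofPath_injective : Function.Injective (ofPath (k := k)) := by
  intro f g h
  funext i
  simpa using congrArg (Sum.inl i ∈ ·) h

lemma isIndepSet'_ofPath_iff {f : Fin k → Bool} :
    (caterpillar k).IsIndepSet' ↑(ofPath f) ↔ NoTwoConsecutive f := by
  constructor
  · intro h i j hij ⟨hi, hj⟩
    exact h (inl_mem_ofPath.2 hi) (inl_mem_ofPath.2 hj) (by simp [Fin.ext_iff]; omega)
      (by simp [hij])
  · rintro h (i | i) hi (j | j) hj hne hadj <;> simp at hi hj hadj
    · rcases hadj with hadj | hadj
      · exact h i j hadj ⟨hi, hj⟩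
      · exact h j i hadj ⟨hj, hi⟩
    · subst hadj; simp_all
    · subst hadj; simp_all

lemma injOn_elim_of_isIndepSet' {s : Finset (Fin k ⊕ Fin k)}
    (hs : (caterpillar k).IsIndepSet' ↑s) :
    Set.InjOn (Sum.elim id id) (s : Set (Fin k ⊕ Fin k)) := by
  rintro (i | i) hi (j | j) hj (rfl : i = j)
  · rfl
  · exact absurd (by simp) (hs hi hj (by simp))
  · exact absurd (by simp) (hs hi hj (by simp))
  · rfl

lemma card_le_of_isIndepSet' {s : Finset (Fin k ⊕ Fin k)}
    (hs : (caterpillar k).IsIndepSet' ↑s) : s.card ≤ k := by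
  simpa using Finset.card_le_card_of_injOn _ (fun _ _ => Finset.mem_univ _)
    (injOn_elim_of_isIndepSet' hs)

lemma eq_ofPath_of_isIndepSet' {s : Finset (Fin k ⊕ Fin k)}
    (hs : (caterpillar k).IsIndepSet' ↑s) (hcard : s.card = k) :
    s = ofPath (fun i => decide (.inl i ∈ s)) := by
  have image_eq : s.image (Sum.elim id id) = Finset.univ := by
    apply Finset.eq_univ_of_card
    rw [Finset.card_image_of_injOn (injOn_elim_of_isIndepSet' hs), hcard, Fintype.card_fin]
  have inr_mem_iff (i : Fin k) : .inr i ∈ s ↔ .inl i ∉ s := by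
    refine ⟨fun hr hl => hs hl hr (by simp) (by simp), fun hl => ?_⟩
    obtain ⟨(j | j), hj, rfl⟩ := Finset.mem_image.1 (image_eq ▸ Finset.mem_univ i)
    exacts [absurd hj hl, hj]
  ext (i | i) <;> simp [inr_mem_iff]

lemma indepNum_eq : _root_.indepNum (caterpillar k) = k := by
  refine IsGreatest.csSup_eq ⟨⟨ofPath fun _ => false, ?_, card_ofPath _⟩, ?_⟩
  · exact isIndepSet'_ofPath_iff.2 (by simp [NoTwoConsecutive])
  · rintro _ ⟨s, hs, rfl⟩
    exact card_le_of_isIndepSet' hs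

lemma maxIndepSets_eq_image_ofPath :
    {s : Finset (Fin k ⊕ Fin k) |
        (caterpillar k).IsIndepSet' ↑s ∧ s.card = _root_.indepNum (caterpillar k)} =
      ofPath '' {f | NoTwoConsecutive f} := by
  ext s
  simp only [indepNum_eq, Set.mem_ofPred_eq, Set.mem_image]
  constructor
  · rintro ⟨hs, hcard⟩
    refine ⟨_, ?_, (eq_ofPath_of_isIndepSet' hs hcard).symm⟩
    rw [← isIndepSet'_ofPath_iff, ← eq_ofPath_of_isIndepSet' hs hcard]
    exact hs
  · rintro ⟨f, hf, rfl⟩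
    exact ⟨isIndepSet'_ofPath_iff.2 hf, card_ofPath f⟩

end caterpillar

theorem stmt11_general (k : ℕ) :
    numMaxIndep (caterpillar k) = Nat.fib (k + 2) := by
  rw [numMaxIndep, caterpillar.maxIndepSets_eq_image_ofPath,
    Set.ncard_image_of_injective _ caterpillar.ofPath_injective]
  exact Nat.card_eq_fintype_card.trans (card_noTwoConsecutive k)

theorem stmt11 (k : ℕ) (hk : 0 < k) :
    numMaxIndep (caterpillar k) = Nat.fib (k + 2) :=
  stmt11_general k
end

section
/- If T is a subcubic tree of order n, then its independence number α(T) is at most (2n+1)/3. -/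
/-!
Every edge of a graph has an endpoint outside a given independent set `s`, so the edges are
covered by the edge-ends at the `n - |s|` vertices outside `s`, at most three at each. For a tree
this gives `n - 1 ≤ 3 (n - |s|)`, i.e. `3 |s| ≤ 2n + 1`.
-/

open SimpleGraph

open Finset

theorem exists_isIndepSet'_card_eq_indepNum {V : Type*} [Fintype V] (G : SimpleGraph V) :
    ∃ s : Finset V, G.IsIndepSet' ↑s ∧ #s = _root_.indepNum G := by
  have hne : {k | ∃ s : Finset V, G.IsIndepSet' ↑s ∧ #s = k}.Nonempty :=
    ⟨0, ∅, by simp [SimpleGraph.IsIndepSet'], rfl⟩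
  have hbdd : BddAbove {k | ∃ s : Finset V, G.IsIndepSet' ↑s ∧ #s = k} :=
    ⟨Fintype.card V, fun _ ⟨s, _, hs⟩ => hs ▸ card_le_univ s⟩
  exact Nat.sSup_mem hne hbdd

namespace SimpleGraph

variable {V : Type*} [Fintype V] [DecidableEq V] (G : SimpleGraph V) [DecidableRel G.Adj]

theorem edgeFinset_subset_biUnion_compl_of_isIndepSet' {s : Finset V} (hs : G.IsIndepSet' ↑s) :
    G.edgeFinset ⊆ sᶜ.biUnion fun v => G.incidenceFinset v := by
  intro e he
  induction e with
  | h a b =>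
    have hab : G.Adj a b := mem_edgeFinset.1 he
    have hout : a ∉ s ∨ b ∉ s := by
      by_contra! h
      exact hs h.1 h.2 hab.ne hab
    rcases hout with ha | hb
    · exact mem_biUnion.2
        ⟨a, mem_compl.2 ha, (G.mem_incidenceFinset _ _).2 ⟨hab, Sym2.mem_mk_left a b⟩⟩
    · exact mem_biUnion.2
        ⟨b, mem_compl.2 hb, (G.mem_incidenceFinset _ _).2 ⟨hab, Sym2.mem_mk_right a b⟩⟩

theorem card_edgeFinset_le_mul_card_compl_of_isIndepSet' {d : ℕ} (hd : ∀ v, G.degree v ≤ d)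
    {s : Finset V} (hs : G.IsIndepSet' ↑s) : #G.edgeFinset ≤ d * #sᶜ :=
  calc #G.edgeFinset ≤ #(sᶜ.biUnion fun v => G.incidenceFinset v) :=
        card_le_card (G.edgeFinset_subset_biUnion_compl_of_isIndepSet' hs)
    _ ≤ ∑ v ∈ sᶜ, #(G.incidenceFinset v) := card_biUnion_le
    _ ≤ ∑ _v ∈ sᶜ, d :=
        sum_le_sum fun v _ => (G.card_incidenceFinset_eq_degree v).trans_le (hd v)
    _ = d * #sᶜ := by rw [sum_const, smul_eq_mul, mul_comm]

end SimpleGraph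

theorem stmt12 {V : Type*} [Fintype V] (T : SimpleGraph V) (hT : T.IsTree)
    (hsub : ∀ v : V, (T.neighborSet v).ncard ≤ 3) (n : ℕ)
    (hn : Fintype.card V = n) :
    3 * _root_.indepNum T ≤ 2 * n + 1 := by
  classical
  obtain ⟨s, hs, hcard⟩ := exists_isIndepSet'_card_eq_indepNum T
  have hdeg : ∀ v, T.degree v ≤ 3 := fun v => by
    simpa only [Set.ncard_eq_toFinset_card', ← neighborFinset_def, card_neighborFinset_eq_degree]
      using hsub v
  have hedges : #T.edgeFinset ≤ 3 * #sᶜ :=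
    T.card_edgeFinset_le_mul_card_compl_of_isIndepSet' hdeg hs
  have htree : #T.edgeFinset + 1 = Fintype.card V := hT.card_edgeFinset
  have hcompl : #s + #sᶜ = Fintype.card V := card_add_card_compl s
  omega
end
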